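/- arXiv:1207.7338 — 6 statements merged into one kernel-verified Lean document; each statement's English description precedes it below -/
import Mathlib

section
/- Let S be a set of pairwise orthogonal bricks in a Hom-finite Krull-Schmidt triangulated k-category T. Suppose there is a distinguished triangle Y → X → Sᵢ → Y[1] with X ∈ (S)ₙ for some n ≥ 1, Sᵢ ∈ S, and the map X → Sᵢ nonzero. Then Y ∈ (S)ₙ₋₁. -/
open CategoryTheory Limits Pretriangulated

universe v u

variable {C : Type u} [Category.{v} C] [Preadditive C] [HasZeroObject C]
  [HasShift C ℤ] [∀ n : ℤ, (shiftFunctor C n).Additive] [Pretriangulated C]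

/-- The extension class `S * T`: objects `X` admitting a distinguished triangle
`A ⟶ X ⟶ B ⟶ A⟦1⟧` with `A ∈ S` and `B ∈ T`. -/
def extStar (S T : Set C) : Set C :=
  {X | ∃ (A B : C) (f : A ⟶ X) (g : X ⟶ B) (h : B ⟶ A⟦(1:ℤ)⟧),
    Triangle.mk f g h ∈ (distTriang C) ∧ A ∈ S ∧ B ∈ T}

/-- The filtration classes `(S)ₙ`, built from the right. -/
def filt (S : Set C) : ℕ → Set C
  | 0 => {X : C | IsZero X}
  | (n+1) => extStar (filt S n) (S ∪ {X : C | IsZero X})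

/-- The filtration classes `ₙ(S)`, built from the left. -/
def filt' (S : Set C) : ℕ → Set C
  | 0 => {X : C | IsZero X}
  | (n+1) => extStar (S ∪ {X : C | IsZero X}) (filt' S n)

/-- The filtration subcategory `F(S) = ⋃ₙ (S)ₙ` generated by `S`. -/
def filtClosure (S : Set C) : Set C := {X | ∃ n, X ∈ filt S n}

/-- A set of pairwise orthogonal bricks: no nonzero maps between distinct members,
and every endomorphism ring is a division ring. -/
def OrthogonalBricks (S : Set C) : Prop :=
  (∀ X ∈ S, ¬ IsZero X ∧ ∀ f : X ⟶ X, f ≠ 0 → IsIso f) ∧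
  (∀ X ∈ S, ∀ Y ∈ S, X ≠ Y → ∀ f : X ⟶ Y, f = 0)

/-- A simple-minded system: a set of pairwise orthogonal bricks whose extension
closure is the whole category. -/
def SimpleMindedSystem (S : Set C) : Prop :=
  OrthogonalBricks S ∧ ∀ X : C, X ∈ filtClosure S

/-- `S^⊥`: objects receiving no nonzero map from objects of `S`. -/
def rightOrth (S : Set C) : Set C := {Y : C | ∀ X ∈ S, ∀ f : X ⟶ Y, f = 0}

/-- `^⊥S`: objects admitting no nonzero map to objects of `S`. -/
def leftOrth (S : Set C) : Set C := {Y : C | ∀ X ∈ S, ∀ f : Y ⟶ X, f = 0}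

/-- `f : A ⟶ M` is a right `T1`-approximation. -/
def IsRightApprox (T1 : Set C) {A M : C} (f : A ⟶ M) : Prop :=
  ∀ A' ∈ T1, ∀ u : A' ⟶ M, ∃ v : A' ⟶ A, v ≫ f = u

/-- `g : M ⟶ B` is a left `T2`-approximation. -/
def IsLeftApprox (T2 : Set C) {M B : C} (g : M ⟶ B) : Prop :=
  ∀ B' ∈ T2, ∀ u : M ⟶ B', ∃ v : B ⟶ B', g ≫ v = u

/-- `f` is right minimal. -/
def RightMinimal {A M : C} (f : A ⟶ M) : Prop :=
  ∀ u : A ⟶ A, u ≫ f = f → IsIso u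

/-- `g` is left minimal. -/
def LeftMinimal {M B : C} (g : M ⟶ B) : Prop :=
  ∀ u : B ⟶ B, g ≫ u = g → IsIso u

/-- A minimal `(T1,T2)`-triangle: a distinguished triangle `A ⟶ M ⟶ B ⟶ A⟦1⟧` with
`A ∈ T1`, `B ∈ T2`, and `A ⟶ M` a minimal right `T1`-approximation. -/
def MinTriangle (T1 T2 : Set C) {A M B : C} (f : A ⟶ M) (g : M ⟶ B)
    (h : B ⟶ A⟦(1:ℤ)⟧) : Prop :=
  Triangle.mk f g h ∈ (distTriang C) ∧ A ∈ T1 ∧ B ∈ T2 ∧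
    IsRightApprox T1 f ∧ RightMinimal f

/-!
Induction on `n`. Write `X` as an extension `A ⟶ X ⟶ B` with `A ∈ (S)ₙ₋₁` and `B ∈ S ∪ {0}`.
If the composite `A ⟶ X ⟶ Sᵢ` vanishes, `g` factors through a nonzero map `B ⟶ Sᵢ`, which
orthogonality of the bricks forces to be an isomorphism, so `Y ≅ A`. Otherwise the fibre `W` of
`A ⟶ Sᵢ` lies in `(S)ₙ₋₂` by induction, and the octahedral axiom gives a triangle `W ⟶ Y ⟶ B`.
-/

noncomputable def isoObj₁OfIsoObj₃ {Y X Z A B : C} {f : Y ⟶ X} {g : X ⟶ Z}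
    {h : Z ⟶ Y⟦(1:ℤ)⟧} {f' : A ⟶ X} {g' : X ⟶ B} {h' : B ⟶ A⟦(1:ℤ)⟧}
    (ht : Triangle.mk f g h ∈ distTriang C) (ht' : Triangle.mk f' g' h' ∈ distTriang C)
    (u : B ≅ Z) (hu : g' ≫ u.hom = g) : A ≅ Y :=
  (shiftFunctor C (1:ℤ)).preimageIso <| Triangle.π₃.mapIso <|
    isoTriangleOfIso₁₂ _ _ (rot_of_distTriang _ ht') (rot_of_distTriang _ ht) (Iso.refl X) u
      (hu.trans (Category.id_comp g).symm)

lemma mem_extStar_of_iso {S T : Set C} {A X B X' B' : C} {f : A ⟶ X} {g : X ⟶ B}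
    {h : B ⟶ A⟦(1:ℤ)⟧} (ht : Triangle.mk f g h ∈ distTriang C) (hA : A ∈ S) (hB' : B' ∈ T)
    (eX : X ≅ X') (eB : B ≅ B') : X' ∈ extStar S T := by
  refine ⟨A, B', f ≫ eX.hom, eX.inv ≫ g ≫ eB.hom, eB.inv ≫ h, ?_, hA, hB'⟩
  exact isomorphic_distinguished _ ht _ (Triangle.isoMk _ _ (Iso.refl A) eX.symm eB.symm
    (by simp [Triangle.mk]) (by simp [Triangle.mk]) (by simp [Triangle.mk]))

lemma mem_filt_of_iso {S : Set C} {n : ℕ} {X X' : C} (e : X ≅ X') (hX : X ∈ filt S n) :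
    X' ∈ filt S n := by
  cases n with
  | zero => exact IsZero.of_iso hX e.symm
  | succ n =>
    obtain ⟨A, B, f, g, h, ht, hA, hB⟩ := hX
    exact mem_extStar_of_iso ht hA hB e (Iso.refl B)

lemma mem_extStar_of_fibre_comp [IsTriangulated C] {P Q : Set C} {A X B Y Z W : C}
    {f' : A ⟶ X} {g' : X ⟶ B} {h' : B ⟶ A⟦(1:ℤ)⟧} (ht' : Triangle.mk f' g' h' ∈ distTriang C)
    {f : Y ⟶ X} {g : X ⟶ Z} {h : Z ⟶ Y⟦(1:ℤ)⟧} (ht : Triangle.mk f g h ∈ distTriang C)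
    {w : W ⟶ A} {d : Z ⟶ W⟦(1:ℤ)⟧} (htW : Triangle.mk w (f' ≫ g) d ∈ distTriang C)
    (hW : W ∈ P) (hB : B ∈ Q) : Y ∈ extStar P Q :=
  -- the octahedron on the fibres of `f'`, `g` and `f' ≫ g` is a triangle `B⟦-1⟧ ⟶ W ⟶ Y ⟶ B⟦-1⟧⟦1⟧`
  let o := Triangulated.someOctahedron' rfl (inv_rot_of_distTriang _ ht') ht htW
  mem_extStar_of_iso (rot_of_distTriang _ o.mem) hW hB (Iso.refl Y) (shiftNegShift B (1:ℤ))

lemma mem_filt_of_comp_eq_zero {S : Set C} (hS : OrthogonalBricks S) {n : ℕ}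
    {A X B Y Si : C} (hA : A ∈ filt S n) (hB : B ∈ S ∪ {Z : C | IsZero Z}) (hSi : Si ∈ S)
    {f' : A ⟶ X} {g' : X ⟶ B} {h' : B ⟶ A⟦(1:ℤ)⟧} (ht' : Triangle.mk f' g' h' ∈ distTriang C)
    {f : Y ⟶ X} {g : X ⟶ Si} {h : Si ⟶ Y⟦(1:ℤ)⟧} (ht : Triangle.mk f g h ∈ distTriang C)
    (hg : g ≠ 0) (hzero : f' ≫ g = 0) : Y ∈ filt S n := by
  obtain ⟨u : B ⟶ Si, rfl⟩ := Triangle.yoneda_exact₂ _ ht' g hzero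
  have hu : u ≠ 0 := by
    rintro rfl
    exact hg Limits.comp_zero
  have hBS : B ∈ S := hB.resolve_right fun hZ => hu (hZ.eq_of_src u 0)
  obtain rfl : B = Si := by
    by_contra hne
    exact hu (hS.2 B hBS Si hSi hne u)
  have : IsIso u := (hS.1 B hSi).2 u hu
  exact mem_filt_of_iso (isoObj₁OfIsoObj₃ ht ht' (asIso u) rfl) hA

theorem mem_filt_of_triangle_to_brick [IsTriangulated C] {S : Set C}
    (hS : OrthogonalBricks S) (n : ℕ) {Y X Si : C} (hSi : Si ∈ S) (hX : X ∈ filt S (n + 1))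
    {f : Y ⟶ X} {g : X ⟶ Si} {h : Si ⟶ Y⟦(1:ℤ)⟧}
    (ht : Triangle.mk f g h ∈ distTriang C) (hg : g ≠ 0) : Y ∈ filt S n := by
  induction n generalizing Y X Si with
  | zero =>
    obtain ⟨A, B, f', g', h', ht', hA, hB⟩ := hX
    exact mem_filt_of_comp_eq_zero hS hA hB hSi ht' ht hg ((hA : IsZero A).eq_of_src _ _)
  | succ n ih =>
    obtain ⟨A, B, f', g', h', ht', hA, hB⟩ := hX
    by_cases hzero : f' ≫ g = 0
    · exact mem_filt_of_comp_eq_zero hS hA hB hSi ht' ht hg hzero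
    · obtain ⟨W, w, d, htW⟩ := distinguished_cocone_triangle₁ (f' ≫ g)
      exact mem_extStar_of_fibre_comp ht' ht htW (ih hSi hA htW hzero) hB

theorem filt_of_triangle_to_brick_general [IsTriangulated C]
    (S : Set C) (hS : OrthogonalBricks S)
    (n : ℕ) (hn : 1 ≤ n) (Y X Si : C) (hSi : Si ∈ S) (hX : X ∈ filt S n)
    (f : Y ⟶ X) (g : X ⟶ Si) (h : Si ⟶ Y⟦(1:ℤ)⟧)
    (ht : Triangle.mk f g h ∈ (distTriang C)) (hg : g ≠ 0) :
    Y ∈ filt S (n - 1) := by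
  obtain ⟨m, rfl⟩ := Nat.exists_eq_add_of_le' hn
  exact mem_filt_of_triangle_to_brick hS m hSi hX ht hg

/-- if `Y ⟶ X ⟶ Sᵢ ⟶ Y[1]` is a distinguished triangle with
`X ∈ (S)ₙ`, `n ≥ 1`, `Sᵢ ∈ S` and the map `X ⟶ Sᵢ` nonzero, then `Y ∈ (S)ₙ₋₁`. -/
theorem filt_of_triangle_to_brick [IsTriangulated C] (k : Type*) [Field k] [Linear k C]
    (hfin : ∀ X Y : C, Module.Finite k (X ⟶ Y)) [IsIdempotentComplete C]
    (S : Set C) (hS : OrthogonalBricks S)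
    (n : ℕ) (hn : 1 ≤ n) (Y X Si : C) (hSi : Si ∈ S) (hX : X ∈ filt S n)
    (f : Y ⟶ X) (g : X ⟶ Si) (h : Si ⟶ Y⟦(1:ℤ)⟧)
    (ht : Triangle.mk f g h ∈ (distTriang C)) (hg : g ≠ 0) :
    Y ∈ filt S (n - 1) :=
  filt_of_triangle_to_brick_general S hS n hn Y X Si hSi hX f g h ht hg
end

section
/- Let (C, D) be a torsion pair in a Hom-finite Krull-Schmidt triangulated category T, and consider a distinguished triangle C →f X →g D →h C[1]. Then the following are equivalent: (1) C ∈ C and f is a minimal right C-approximation; (2) D ∈ D and g is a minimal left D-approximation. -/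
open CategoryTheory Limits Pretriangulated

universe v u

variable {C : Type u} [Category.{v} C] [Preadditive C] [HasZeroObject C]
  [HasShift C ℤ] [∀ n : ℤ, (shiftFunctor C n).Additive] [Pretriangulated C]

/-- A torsion pair `(T1, T2)`: two classes closed under isomorphisms, finite direct
sums and direct summands, containing the zero objects, with no nonzero maps from
`T1` to `T2`, and such that every object fits in a distinguished triangle with
outer terms in `T1` and `T2`. -/
structure TorsionPair [HasBinaryBiproducts C] (T1 T2 : Set C) : Prop where
  iso1 : ∀ {X Y : C}, (X ≅ Y) → X ∈ T1 → Y ∈ T1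
  iso2 : ∀ {X Y : C}, (X ≅ Y) → X ∈ T2 → Y ∈ T2
  zero1 : ∀ X : C, IsZero X → X ∈ T1
  zero2 : ∀ X : C, IsZero X → X ∈ T2
  sum1 : ∀ X Y : C, X ∈ T1 → Y ∈ T1 → (X ⊞ Y) ∈ T1
  sum2 : ∀ X Y : C, X ∈ T2 → Y ∈ T2 → (X ⊞ Y) ∈ T2
  summand1 : ∀ X Y : C, (X ⊞ Y) ∈ T1 → X ∈ T1
  summand2 : ∀ X Y : C, (X ⊞ Y) ∈ T2 → X ∈ T2
  hom_zero : ∀ X ∈ T1, ∀ Y ∈ T2, ∀ f : X ⟶ Y, f = 0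
  exists_triangle : ∀ X : C, ∃ (A B : C) (f : A ⟶ X) (g : X ⟶ B) (h : B ⟶ A⟦(1:ℤ)⟧),
    Triangle.mk f g h ∈ (distTriang C) ∧ A ∈ T1 ∧ B ∈ T2

/-!
Compare the triangle `A ⟶ X ⟶ B ⟶` with a torsion triangle `A₀ ⟶ X ⟶ B₀ ⟶` of `X`.
Since `Hom(T1, T2) = 0`, the exact Hom sequence lets `f` factor through `f₀`, and the
approximation property lets `f₀` factor through `f`. Both factorizations extend to morphisms of
triangles that are the identity on `X`; right minimality makes their composite invertible on `A`,
hence on `B`. So `B` is a retract of `B₀ ∈ T2`, and in an idempotent complete category retracts are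
direct summands. The converse is dual, minimality transfers along the triangle because a triangle
endomorphism that is the identity on `X` is invertible at one end iff at the other, and
`Hom(T1, T2) = 0` makes `g` a left `T2`-approximation as soon as `A ∈ T1`.
-/

section Retracts

variable {𝒜 : Type*} [Category 𝒜] [Preadditive 𝒜] [HasBinaryBiproducts 𝒜]
  [IsIdempotentComplete 𝒜]

/-- The complement of a retract is the image of the idempotent `𝟙 - r ≫ i`. -/
lemma CategoryTheory.Retract.exists_iso_biprod {Z W : 𝒜} (e : Retract Z W) :
    ∃ Y : 𝒜, Nonempty (W ≅ Z ⊞ Y) := by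
  have hidem : (𝟙 W - e.r ≫ e.i) ≫ (𝟙 W - e.r ≫ e.i) = 𝟙 W - e.r ≫ e.i := by
    simp [Preadditive.comp_sub, Preadditive.sub_comp]
  obtain ⟨Y, j, q, hjq, hqj⟩ := IsIdempotentComplete.idempotents_split W _ hidem
  have hiq : e.i ≫ q = 0 := calc
    e.i ≫ q = e.i ≫ (q ≫ j) ≫ q := by simp [hjq]
    _ = 0 := by simp [hqj, Preadditive.comp_sub]
  have hjr : j ≫ e.r = 0 := calc
    j ≫ e.r = j ≫ (q ≫ j) ≫ e.r := by simp [reassoc_of% hjq]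
    _ = 0 := by simp [hqj, Preadditive.sub_comp]
  let b : BinaryBicone Z Y :=
    { pt := W, fst := e.r, snd := q, inl := e.i, inr := j
      inl_fst := e.retract, inl_snd := hiq, inr_fst := hjr, inr_snd := hjq }
  exact ⟨Y, ⟨biprod.uniqueUpToIso Z Y (isBinaryBilimitOfTotal b (by simp [b, hqj]))⟩⟩

lemma mem_of_retract {S : Set 𝒜} (hiso : ∀ {X Y : 𝒜}, (X ≅ Y) → X ∈ S → Y ∈ S)
    (hsummand : ∀ X Y : 𝒜, (X ⊞ Y) ∈ S → X ∈ S) {Z W : 𝒜} (e : Retract Z W) (hW : W ∈ S) :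
    Z ∈ S := by
  obtain ⟨Y, ⟨φ⟩⟩ := e.exists_iso_biprod
  exact hsummand Z Y (hiso φ hW)

end Retracts

noncomputable def CategoryTheory.Retract.ofIsIsoComp {𝒜 : Type*} [Category 𝒜] {X Y : 𝒜}
    (i : X ⟶ Y) (r : Y ⟶ X) [IsIso (i ≫ r)] : Retract X Y where
  i := i
  r := r ≫ inv (i ≫ r)
  retract := by rw [← Category.assoc, IsIso.hom_inv_id]

section Triangles

variable {T T' : Triangle C}

lemma exists_triangle_hom_of_comm₁ (hT : T ∈ distTriang C) (hT' : T' ∈ distTriang C)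
    (a : T.obj₁ ⟶ T'.obj₁) (b : T.obj₂ ⟶ T'.obj₂) (comm : T.mor₁ ≫ b = a ≫ T'.mor₁) :
    ∃ φ : T ⟶ T', φ.hom₁ = a ∧ φ.hom₂ = b := by
  obtain ⟨c, hc₂, hc₃⟩ := complete_distinguished_triangle_morphism _ _ hT hT' a b comm
  exact ⟨Triangle.homMk _ _ a b c comm hc₂ hc₃, rfl, rfl⟩

lemma exists_triangle_hom_of_comm₂ (hT : T ∈ distTriang C) (hT' : T' ∈ distTriang C)
    (b : T.obj₂ ⟶ T'.obj₂) (c : T.obj₃ ⟶ T'.obj₃) (comm : T.mor₂ ≫ c = b ≫ T'.mor₂) :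
    ∃ φ : T ⟶ T', φ.hom₂ = b ∧ φ.hom₃ = c := by
  obtain ⟨a, ha₁, ha₃⟩ := complete_distinguished_triangle_morphism₁ _ _ hT hT' b c comm
  exact ⟨Triangle.homMk _ _ a b c ha₁ comm ha₃, rfl, rfl⟩

end Triangles

section MinimalApproximations

variable {T : Triangle C}

lemma isLeftApprox_of_mem_leftOrth {T2 : Set C} (hT : T ∈ distTriang C)
    (h₁ : T.obj₁ ∈ leftOrth T2) : IsLeftApprox T2 T.mor₂ := fun B hB u => by
  obtain ⟨v, hv⟩ := Triangle.yoneda_exact₂ T hT u (h₁ B hB _)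
  exact ⟨v, hv.symm⟩

lemma isRightApprox_of_mem_rightOrth {T1 : Set C} (hT : T ∈ distTriang C)
    (h₃ : T.obj₃ ∈ rightOrth T1) : IsRightApprox T1 T.mor₁ := fun A hA u => by
  obtain ⟨v, hv⟩ := Triangle.coyoneda_exact₂ T hT u (h₃ A hA _)
  exact ⟨v, hv.symm⟩

lemma leftMinimal_of_rightMinimal (hT : T ∈ distTriang C) (hmin : RightMinimal T.mor₁) :
    LeftMinimal T.mor₂ := by
  intro c hc
  obtain ⟨φ, hφ₂, hφ₃⟩ := exists_triangle_hom_of_comm₂ hT hT (𝟙 _) c (by simpa using hc)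
  have : IsIso φ.hom₁ := hmin _ (by rw [← φ.comm₁, hφ₂, Category.comp_id])
  have : IsIso φ.hom₂ := by rw [hφ₂]; infer_instance
  exact hφ₃ ▸ isIso₃_of_isIso₁₂ φ hT hT ‹_› ‹_›

lemma rightMinimal_of_leftMinimal (hT : T ∈ distTriang C) (hmin : LeftMinimal T.mor₂) :
    RightMinimal T.mor₁ := by
  intro a ha
  obtain ⟨φ, hφ₁, hφ₂⟩ := exists_triangle_hom_of_comm₁ hT hT a (𝟙 _) (by simpa using ha.symm)
  have : IsIso φ.hom₃ := hmin _ (by rw [φ.comm₂, hφ₂, Category.id_comp])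
  have : IsIso φ.hom₂ := by rw [hφ₂]; infer_instance
  exact hφ₁ ▸ isIso₁_of_isIso₂₃ φ hT hT ‹_› ‹_›

namespace TorsionPair

variable [HasBinaryBiproducts C] {T1 T2 : Set C} (htp : TorsionPair T1 T2)
include htp

lemma mem_leftOrth {A : C} (hA : A ∈ T1) : A ∈ leftOrth T2 :=
  fun B hB u => htp.hom_zero A hA B hB u

lemma mem_rightOrth {B : C} (hB : B ∈ T2) : B ∈ rightOrth T1 :=
  fun A hA u => htp.hom_zero A hA B hB u

variable [IsIdempotentComplete C]

lemma mem₂_of_rightMinimal (hT : T ∈ distTriang C) (h₁ : T.obj₁ ∈ T1)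
    (happ : IsRightApprox T1 T.mor₁) (hmin : RightMinimal T.mor₁) : T.obj₃ ∈ T2 := by
  obtain ⟨A₀, B₀, f₀, g₀, h₀, hT₀, hA₀, hB₀⟩ := htp.exists_triangle T.obj₂
  obtain ⟨s, hs⟩ : ∃ s : T.obj₁ ⟶ A₀, T.mor₁ = s ≫ f₀ :=
    Triangle.coyoneda_exact₂ _ hT₀ T.mor₁ (htp.mem_leftOrth h₁ B₀ hB₀ _)
  obtain ⟨t, ht⟩ := happ A₀ hA₀ f₀
  obtain ⟨φ, hφ₁, hφ₂⟩ := exists_triangle_hom_of_comm₁ hT hT₀ s (𝟙 _)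
    ((Category.comp_id _).trans hs)
  obtain ⟨ψ, hψ₁, hψ₂⟩ := exists_triangle_hom_of_comm₁ hT₀ hT t (𝟙 _)
    ((Category.comp_id _).trans ht.symm)
  have hst : IsIso (s ≫ t) := hmin _ (by rw [Category.assoc, ht, ← hs])
  have : IsIso (φ ≫ ψ).hom₁ := by rw [comp_hom₁, hφ₁, hψ₁]; exact hst
  -- `T₀.obj₂` is `T.obj₂` only after unfolding `Triangle.mk`, which instance search does not do.
  have : IsIso (φ ≫ ψ).hom₂ := by
    rw [comp_hom₂, hφ₂, hψ₂]; exact inferInstanceAs (IsIso (𝟙 T.obj₂ ≫ 𝟙 T.obj₂))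
  have : IsIso (φ.hom₃ ≫ ψ.hom₃) := isIso₃_of_isIso₁₂ (φ ≫ ψ) hT hT ‹_› ‹_›
  exact mem_of_retract htp.iso2 htp.summand2 (Retract.ofIsIsoComp φ.hom₃ ψ.hom₃) hB₀

lemma mem₁_of_leftMinimal (hT : T ∈ distTriang C) (h₃ : T.obj₃ ∈ T2)
    (happ : IsLeftApprox T2 T.mor₂) (hmin : LeftMinimal T.mor₂) : T.obj₁ ∈ T1 := by
  obtain ⟨A₀, B₀, f₀, g₀, h₀, hT₀, hA₀, hB₀⟩ := htp.exists_triangle T.obj₂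
  obtain ⟨s, hs⟩ : ∃ s : B₀ ⟶ T.obj₃, T.mor₂ = g₀ ≫ s :=
    Triangle.yoneda_exact₂ _ hT₀ T.mor₂ (htp.mem_rightOrth h₃ A₀ hA₀ _)
  obtain ⟨t, ht⟩ := happ B₀ hB₀ g₀
  obtain ⟨φ, hφ₂, hφ₃⟩ := exists_triangle_hom_of_comm₂ hT hT₀ (𝟙 _) t
    (ht.trans (Category.id_comp _).symm)
  obtain ⟨ψ, hψ₂, hψ₃⟩ := exists_triangle_hom_of_comm₂ hT₀ hT (𝟙 _) s
    (hs.symm.trans (Category.id_comp _).symm)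
  have hts : IsIso (t ≫ s) := hmin _ (by rw [← Category.assoc, ht, ← hs])
  have : IsIso (φ ≫ ψ).hom₂ := by
    rw [comp_hom₂, hφ₂, hψ₂]; exact inferInstanceAs (IsIso (𝟙 T.obj₂ ≫ 𝟙 T.obj₂))
  have : IsIso (φ ≫ ψ).hom₃ := by rw [comp_hom₃, hφ₃, hψ₃]; exact hts
  have : IsIso (φ.hom₁ ≫ ψ.hom₁) := isIso₁_of_isIso₂₃ (φ ≫ ψ) hT hT ‹_› ‹_›
  exact mem_of_retract htp.iso1 htp.summand1 (Retract.ofIsIsoComp φ.hom₁ ψ.hom₁) hA₀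

end TorsionPair

end MinimalApproximations

theorem torsionPair_minimal_tfae_general [HasBinaryBiproducts C] [IsIdempotentComplete C]
    (T1 T2 : Set C) (htp : TorsionPair T1 T2)
    (A X B : C) (f : A ⟶ X) (g : X ⟶ B) (h : B ⟶ A⟦(1:ℤ)⟧)
    (ht : Triangle.mk f g h ∈ (distTriang C)) :
    (A ∈ T1 ∧ IsRightApprox T1 f ∧ RightMinimal f) ↔
    (B ∈ T2 ∧ IsLeftApprox T2 g ∧ LeftMinimal g) := by
  constructor
  · rintro ⟨hA, happ, hmin⟩
    exact ⟨htp.mem₂_of_rightMinimal ht hA happ hmin,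
      isLeftApprox_of_mem_leftOrth ht (htp.mem_leftOrth hA), leftMinimal_of_rightMinimal ht hmin⟩
  · rintro ⟨hB, happ, hmin⟩
    exact ⟨htp.mem₁_of_leftMinimal ht hB happ hmin,
      isRightApprox_of_mem_rightOrth ht (htp.mem_rightOrth hB), rightMinimal_of_leftMinimal ht hmin⟩

/-- for a torsion pair `(T1,T2)` and a distinguished triangle
`A ⟶ X ⟶ B ⟶`, `A ∈ T1` with `f` a minimal right `T1`-approximation iff
`B ∈ T2` with `g` a minimal left `T2`-approximation. -/
theorem torsionPair_minimal_tfae [IsTriangulated C] [HasBinaryBiproducts C] (k : Type*) [Field k] [Linear k C]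
    (hfin : ∀ X Y : C, Module.Finite k (X ⟶ Y)) [IsIdempotentComplete C]
    (T1 T2 : Set C) (htp : TorsionPair T1 T2)
    (A X B : C) (f : A ⟶ X) (g : X ⟶ B) (h : B ⟶ A⟦(1:ℤ)⟧)
    (ht : Triangle.mk f g h ∈ (distTriang C)) :
    (A ∈ T1 ∧ IsRightApprox T1 f ∧ RightMinimal f) ↔
    (B ∈ T2 ∧ IsLeftApprox T2 g ∧ LeftMinimal g) :=
  torsionPair_minimal_tfae_general T1 T2 htp A X B f g h ht
end

section
/- In a Krull-Schmidt triangulated category, a (C,D)-triangle C →f X →g D → (with C ∈ C, D ∈ D, f a right C-approximation, g a left D-approximation coming from a torsion pair (C,D)) is necessarily minimal whenever C is indecomposable and f is nonzero (respectively, whenever D is indecomposable and g is nonzero). -/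
open CategoryTheory Limits Pretriangulated

universe v u

variable {C : Type u} [Category.{v} C] [Preadditive C] [HasZeroObject C]
  [HasShift C ℤ] [∀ n : ℤ, (shiftFunctor C n).Additive] [Pretriangulated C]

/-- An object is indecomposable if it is nonzero and admits no decomposition into
two nonzero direct summands. -/
def Indec [HasBinaryBiproducts C] (A : C) : Prop :=
  ¬ IsZero A ∧ ∀ (Y Z : C), (A ≅ Y ⊞ Z) → IsZero Y ∨ IsZero Z

/-!
A nonzero morphism out of an object with local endomorphism ring is right minimal,
since `u ≫ f = f` makes `(𝟙 - u) ≫ f = 0`, so `𝟙 - u` is not invertible and hence `u` is.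
Endomorphism rings of indecomposables are local here: in an idempotent complete category an
idempotent endomorphism of `A` splits `A` as a biproduct, so `End A` has only the idempotents
`0` and `1`, and in a finite dimensional algebra with no other idempotents every element is
invertible or nilpotent (Fitting's lemma).
-/

section Fitting

variable {R : Type*}

theorem isUnit_or_isNilpotent_of_pow_succ_mul_eq_pow [CommRing R]
    (hR : ∀ e : R, IsIdempotentElem e → e = 0 ∨ e = 1) {x y : R} {n : ℕ}
    (h : x ^ (n + 1) * y = x ^ n) : IsUnit x ∨ IsNilpotent x := by
  have absorb : ∀ j, x ^ (n + j) * y ^ j = x ^ n := by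
    intro j
    induction j with
    | zero => simp
    | succ j ih =>
      calc x ^ (n + (j + 1)) * y ^ (j + 1) = x ^ (n + 1) * y * (x ^ j * y ^ j) := by ring
        _ = x ^ n := by rw [h, ← mul_assoc, ← pow_add, ih]
  -- `e` is the idempotent projecting onto the part of `R` on which `x` acts invertibly.
  set e := x ^ n * y ^ n with he
  have hxe : x ^ n * e = x ^ n := by
    calc x ^ n * e = x ^ (n + n) * y ^ n := by ring
      _ = x ^ n := absorb n
  have idem : IsIdempotentElem e := by
    calc e * e = x ^ n * e * y ^ n := by ring
      _ = e := by rw [hxe]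
  rcases hR e idem with he0 | he1
  · exact Or.inr ⟨n, by rw [← hxe, he0, mul_zero]⟩
  · refine Or.inl (IsUnit.of_mul_eq_one (x ^ n * y ^ (n + 1)) ?_)
    calc x * (x ^ n * y ^ (n + 1)) = x ^ (n + 1) * y * y ^ n := by ring
      _ = 1 := by rw [h, ← he, he1]

theorem IsArtinianRing.isUnit_or_isNilpotent [CommRing R] [IsArtinianRing R]
    (hR : ∀ e : R, IsIdempotentElem e → e = 0 ∨ e = 1) (x : R) : IsUnit x ∨ IsNilpotent x := by
  obtain ⟨n, y, h⟩ := IsArtinian.exists_pow_succ_smul_dvd x (1 : R)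
  exact isUnit_or_isNilpotent_of_pow_succ_mul_eq_pow hR (by simpa using h)

open scoped IsMulCommutative in
theorem IsLocalRing.of_finite_of_isIdempotentElem (k : Type*) [CommRing k] [IsArtinianRing k]
    [Ring R] [Nontrivial R] [Algebra k R] [Module.Finite k R]
    (hR : ∀ e : R, IsIdempotentElem e → e = 0 ∨ e = 1) : IsLocalRing R := by
  refine .of_isUnit_or_isUnit_one_sub_self fun u => ?_
  let S := Algebra.adjoin k ({u} : Set R)
  have : Module.Finite k S := .of_injective S.val.toLinearMap Subtype.val_injective
  have : IsArtinianRing S := isArtinian_of_tower k isArtinian_of_fg_of_artinian'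
  have hS : ∀ e : S, IsIdempotentElem e → e = 0 ∨ e = 1 := fun e he =>
    (hR e (he.map S.val)).imp Subtype.ext Subtype.ext
  rcases IsArtinianRing.isUnit_or_isNilpotent hS ⟨u, Algebra.self_mem_adjoin_singleton k u⟩
    with hu | hu
  · exact Or.inl (hu.map S.val)
  · exact Or.inr (hu.map S.val).isUnit_one_sub

end Fitting

section LocalEnd

variable {𝒞 : Type*} [Category 𝒞] [Preadditive 𝒞]

theorem rightMinimal_of_isLocalRing_end {A X : 𝒞} [IsLocalRing (End A)] {f : A ⟶ X}
    (hf : f ≠ 0) : RightMinimal f := by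
  intro u hu
  rw [← isUnit_iff_isIso]
  refine (IsLocalRing.isUnit_or_isUnit_of_add_one
    (add_sub_cancel (G := End _) u 1)).resolve_right ?_
  intro hunit
  have : IsIso (𝟙 A - u) := (isUnit_iff_isIso _).mp hunit
  refine hf ((cancel_epi (𝟙 A - u)).mp ?_)
  rw [Preadditive.sub_comp, Category.id_comp, hu, sub_self, comp_zero]

theorem leftMinimal_of_isLocalRing_end {X B : 𝒞} [IsLocalRing (End B)] {g : X ⟶ B}
    (hg : g ≠ 0) : LeftMinimal g := by
  intro u hu
  rw [← isUnit_iff_isIso]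
  refine (IsLocalRing.isUnit_or_isUnit_of_add_one
    (add_sub_cancel (G := End _) u 1)).resolve_right ?_
  intro hunit
  have : IsIso (𝟙 B - u) := (isUnit_iff_isIso _).mp hunit
  refine hg ((cancel_mono (𝟙 B - u)).mp ?_)
  rw [Preadditive.comp_sub, Category.comp_id, hu, sub_self, zero_comp]

theorem Indec.eq_zero_or_eq_id_of_idem [HasBinaryBiproducts 𝒞] [IsIdempotentComplete 𝒞] {A : 𝒞}
    (hA : Indec A) {e : A ⟶ A} (he : e ≫ e = e) : e = 0 ∨ e = 𝟙 A := by
  obtain ⟨Y, i, p, hip, hpi⟩ := IsIdempotentComplete.idempotents_split A e he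
  obtain ⟨Z, i', p', hip', hpi'⟩ :=
    IsIdempotentComplete.idempotents_split A (𝟙 A - e) (Idempotents.idem_of_id_sub_idem e he)
  have hi : i ≫ e = i := by rw [← hpi, reassoc_of% hip]
  have hi' : i' ≫ e = 0 := by
    have : i' ≫ (𝟙 A - e) = i' := by rw [← hpi', reassoc_of% hip']
    rwa [Preadditive.comp_sub, Category.comp_id, sub_eq_self] at this
  have hp : e ≫ p = p := by rw [← hpi, Category.assoc, hip, Category.comp_id]
  have hp' : (𝟙 A - e) ≫ p' = p' := by rw [← hpi', Category.assoc, hip', Category.comp_id]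
  let b : BinaryBicone Y Z :=
    { pt := A, fst := p, snd := p', inl := i, inr := i', inl_fst := hip, inr_snd := hip'
      inl_snd := by rw [← hp', Preadditive.comp_sub_assoc, Category.comp_id, hi, sub_self,
        zero_comp]
      inr_fst := by rw [← hp, ← Category.assoc, hi', zero_comp] }
  have total : b.fst ≫ b.inl + b.snd ≫ b.inr = 𝟙 A := by
    change p ≫ i + p' ≫ i' = 𝟙 A
    rw [hpi, hpi', add_sub_cancel]
  rcases hA.2 Y Z (biprod.uniqueUpToIso Y Z (isBinaryBilimitOfTotal b total)) with hY | hZ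
  · left
    rw [← hpi, hY.eq_of_tgt p 0, zero_comp]
  · right
    have : 𝟙 A - e = 0 := by rw [← hpi', hZ.eq_of_tgt p' 0, zero_comp]
    exact (sub_eq_zero.mp this).symm

theorem Indec.isLocalRing_end (k : Type*) [CommRing k] [IsArtinianRing k] [Linear k 𝒞]
    [HasBinaryBiproducts 𝒞] [IsIdempotentComplete 𝒞] {A : 𝒞} [Module.Finite k (End A)]
    (hA : Indec A) : IsLocalRing (End A) :=
  have : Nontrivial (End A) := ⟨⟨1, 0, fun h => hA.1 ((IsZero.iff_id_eq_zero A).mpr h)⟩⟩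
  .of_finite_of_isIdempotentElem k fun _ he => hA.eq_zero_or_eq_id_of_idem he

end LocalEnd

theorem torsionPair_triangle_minimal_general [HasBinaryBiproducts C] (k : Type*) [Field k] [Linear k C]
    (hfin : ∀ X Y : C, Module.Finite k (X ⟶ Y)) [IsIdempotentComplete C]
    (A X B : C) (f : A ⟶ X) (g : X ⟶ B) :
    (Indec A → f ≠ 0 → RightMinimal f) ∧
    (Indec B → g ≠ 0 → LeftMinimal g) := by
  refine ⟨fun hA hf => ?_, fun hB hg => ?_⟩
  · have : Module.Finite k (End A) := hfin A A
    have := hA.isLocalRing_end k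
    exact rightMinimal_of_isLocalRing_end hf
  · have : Module.Finite k (End B) := hfin B B
    have := hB.isLocalRing_end k
    exact leftMinimal_of_isLocalRing_end hg

/-- a `(T1,T2)`-triangle is minimal whenever `A` is indecomposable
and `f ≠ 0` (respectively, `B` indecomposable and `g ≠ 0`). -/
theorem torsionPair_triangle_minimal [IsTriangulated C] [HasBinaryBiproducts C] (k : Type*) [Field k] [Linear k C]
    (hfin : ∀ X Y : C, Module.Finite k (X ⟶ Y)) [IsIdempotentComplete C]
    (T1 T2 : Set C) (htp : TorsionPair T1 T2)
    (A X B : C) (f : A ⟶ X) (g : X ⟶ B) (h : B ⟶ A⟦(1:ℤ)⟧)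
    (ht : Triangle.mk f g h ∈ (distTriang C)) (hA : A ∈ T1) (hB : B ∈ T2) :
    (Indec A → f ≠ 0 → RightMinimal f) ∧
    (Indec B → g ≠ 0 → LeftMinimal g) :=
  torsionPair_triangle_minimal_general k hfin A X B f g
end

section
/- Suppose X ⊆ S for a simple-minded system S in a Hom-finite Krull-Schmidt triangulated k-category T. Then (^⊥X, F(X)) and (F(X), X^⊥) are torsion pairs in T. In particular, F(X) is a functorially finite subcategory of T and F(X) = (^⊥X)^⊥ = ^⊥(X^⊥). -/
/-!
Both torsion pairs come from induction on the `S`-length of an object `M`. If `M ∉ X^⊥`, some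
`x ∈ X` maps nonzero to `M`; since `S` consists of pairwise orthogonal bricks, the cone of
`x ⟶ M` has smaller `S`-length, and the octahedral axiom glues `x` onto the `F(X)`-part of the
triangle of the cone. Dually, fibres of nonzero maps `M ⟶ x` give the triangles with outer terms
in `^⊥X` and `F(X)`. The remaining point is that `F(X)` is closed under retracts: if `M` is a
retract of `P ∈ (X)ₙ₊₁` and `M ⟶ P ⟶ s` is nonzero, the fibre of `M ⟶ s` is a retract of the
shorter fibre of `P ⟶ s` (an endomorphism of a triangle that is the identity on two vertices is
an isomorphism). Then `F(X)` is `^⊥(X^⊥)` and `(^⊥X)^⊥`, and orthogonal classes are closed under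
isomorphisms, sums and summands.
-/

open CategoryTheory Limits Pretriangulated

universe v u

variable {C : Type u} [Category.{v} C] [Preadditive C] [HasZeroObject C]
  [HasShift C ℤ] [∀ n : ℤ, (shiftFunctor C n).Additive] [Pretriangulated C]

open ZeroObject

section Preadditive

variable {D : Type*} [Category D] [Preadditive D]

lemma mem_leftOrth_of_retract {Y : Set D} {M P : D} (e : Retract M P) (hP : P ∈ leftOrth Y) :
    M ∈ leftOrth Y := fun y hy f => by
  rw [← Category.id_comp f, ← e.retract, Category.assoc, hP y hy (e.r ≫ f), comp_zero]

lemma mem_rightOrth_of_retract {Y : Set D} {M P : D} (e : Retract M P) (hP : P ∈ rightOrth Y) :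
    M ∈ rightOrth Y := fun y hy f => by
  rw [← Category.comp_id f, ← e.retract, ← Category.assoc, hP y hy (f ≫ e.i), zero_comp]

lemma OrthogonalBricks.mono {S X : Set D} (hS : OrthogonalBricks S) (hXS : X ⊆ S) :
    OrthogonalBricks X :=
  ⟨fun x hx => hS.1 x (hXS hx), fun x hx y hy => hS.2 x (hXS hx) y (hXS hy)⟩

lemma OrthogonalBricks.isIso_of_ne_zero {S : Set D} (hS : OrthogonalBricks S) {x y : D}
    (hx : x ∈ S) (hy : y ∈ S) {f : x ⟶ y} (hf : f ≠ 0) : IsIso f := by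
  obtain rfl : x = y := by_contra fun hne => hf (hS.2 x hx y hy hne f)
  exact (hS.1 x hx).2 f hf

end Preadditive

section Pretriangulated

variable {T1 T2 : Set C}

lemma distTriang_coyoneda_exact {A M B Y : C} {f : A ⟶ M} {g : M ⟶ B} {h : B ⟶ A⟦(1:ℤ)⟧}
    (hT : Triangle.mk f g h ∈ distTriang C) (u : Y ⟶ M) (hu : u ≫ g = 0) :
    ∃ v : Y ⟶ A, u = v ≫ f :=
  Triangle.coyoneda_exact₂ _ hT u hu

lemma distTriang_yoneda_exact {A M B Y : C} {f : A ⟶ M} {g : M ⟶ B} {h : B ⟶ A⟦(1:ℤ)⟧}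
    (hT : Triangle.mk f g h ∈ distTriang C) (u : M ⟶ Y) (hu : f ≫ u = 0) :
    ∃ v : B ⟶ Y, u = g ≫ v :=
  Triangle.yoneda_exact₂ _ hT u hu

lemma exists_distTriang_of_shift {A B D : C} {f : A⟦(1:ℤ)⟧ ⟶ B⟦(1:ℤ)⟧}
    {g : B⟦(1:ℤ)⟧ ⟶ D⟦(1:ℤ)⟧} {h : D⟦(1:ℤ)⟧ ⟶ A⟦(1:ℤ)⟧⟦(1:ℤ)⟧}
    (hT : Triangle.mk f g h ∈ distTriang C) :
    ∃ (f' : A ⟶ B) (g' : B ⟶ D) (h' : D ⟶ A⟦(1:ℤ)⟧), Triangle.mk f' g' h' ∈ distTriang C := by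
  let T := (shiftFunctor (Triangle C) (-1 : ℤ)).obj (Triangle.mk f g h)
  let e : ∀ X : C, X ≅ X⟦(1:ℤ)⟧⟦(-1:ℤ)⟧ := fun X => (shiftEquiv C (1:ℤ)).unitIso.app X
  let f₁ : A⟦(1:ℤ)⟧⟦(-1:ℤ)⟧ ⟶ B⟦(1:ℤ)⟧⟦(-1:ℤ)⟧ := T.mor₁
  let g₁ : B⟦(1:ℤ)⟧⟦(-1:ℤ)⟧ ⟶ D⟦(1:ℤ)⟧⟦(-1:ℤ)⟧ := T.mor₂
  let h₁ : D⟦(1:ℤ)⟧⟦(-1:ℤ)⟧ ⟶ A⟦(1:ℤ)⟧⟦(-1:ℤ)⟧⟦(1:ℤ)⟧ := T.mor₃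
  refine ⟨(e A).hom ≫ f₁ ≫ (e B).inv, (e B).hom ≫ g₁ ≫ (e D).inv,
    (e D).hom ≫ h₁ ≫ (e A).inv⟦(1:ℤ)⟧',
    isomorphic_distinguished _ (Triangle.shift_distinguished _ hT (-1)) _
      (Triangle.isoMk _ _ (e A) (e B) (e D) ?_ ?_ ?_)⟩
  · exact show ((e A).hom ≫ f₁ ≫ (e B).inv) ≫ (e B).hom = (e A).hom ≫ f₁ by simp
  · exact show ((e B).hom ≫ g₁ ≫ (e D).inv) ≫ (e D).hom = (e B).hom ≫ g₁ by simp
  · exact show ((e D).hom ≫ h₁ ≫ (e A).inv⟦(1:ℤ)⟧') ≫ (e A).hom⟦(1:ℤ)⟧' = (e D).hom ≫ h₁ by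
      simp [← Functor.map_comp]

lemma nonempty_retract_fiber {M P s F G : C} {f : F ⟶ M} {g : M ⟶ s} {w : s ⟶ F⟦(1:ℤ)⟧}
    {f' : G ⟶ P} {g' : P ⟶ s} {w' : s ⟶ G⟦(1:ℤ)⟧}
    (hF : Triangle.mk f g w ∈ distTriang C) (hG : Triangle.mk f' g' w' ∈ distTriang C)
    (e : Retract M P) (hi : e.i ≫ g' = g) (hr : e.r ≫ g = g') : Nonempty (Retract F G) := by
  obtain ⟨α, hα₁, hα₂⟩ : ∃ α : F ⟶ G, f ≫ e.i = α ≫ f' ∧ w ≫ α⟦(1:ℤ)⟧' = 𝟙 s ≫ w' :=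
    complete_distinguished_triangle_morphism₁ _ _ hF hG e.i (𝟙 s)
      ((Category.comp_id _).trans hi.symm)
  obtain ⟨β, hβ₁, hβ₂⟩ : ∃ β : G ⟶ F, f' ≫ e.r = β ≫ f ∧ w' ≫ β⟦(1:ℤ)⟧' = 𝟙 s ≫ w :=
    complete_distinguished_triangle_morphism₁ _ _ hG hF e.r (𝟙 s)
      ((Category.comp_id _).trans hr.symm)
  -- `α ≫ β` extends to an endomorphism of the triangle that is the identity on the other two
  -- vertices, so it is an isomorphism
  let φ : Triangle.mk f g w ⟶ Triangle.mk f g w :=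
    Triangle.homMk _ _ (α ≫ β) (𝟙 M) (𝟙 s)
      (show f ≫ 𝟙 M = (α ≫ β) ≫ f by simp [← hβ₁, ← reassoc_of% hα₁])
      (show g ≫ 𝟙 s = 𝟙 M ≫ g by simp)
      (show w ≫ (α ≫ β)⟦(1:ℤ)⟧' = 𝟙 s ≫ w by simp [reassoc_of% hα₂, hβ₂])
  have : IsIso (α ≫ β) := isIso₁_of_isIso₂₃ φ hF hF (show IsIso (𝟙 M) by infer_instance)
    (show IsIso (𝟙 s) by infer_instance)
  exact ⟨⟨α, β ≫ inv (α ≫ β), by rw [← Category.assoc, IsIso.hom_inv_id]⟩⟩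

lemma eq_leftOrth_of_forall_mem_extStar (hret : ∀ {M A : C}, Retract M A → A ∈ T1 → M ∈ T1)
    (hhom : ∀ A ∈ T1, ∀ B ∈ T2, ∀ f : A ⟶ B, f = 0) (htri : ∀ M : C, M ∈ extStar T1 T2) :
    T1 = leftOrth T2 := by
  refine Set.Subset.antisymm hhom fun M hM => ?_
  obtain ⟨A, B, f, g, h, hT, hA, hB⟩ := htri M
  obtain ⟨s, hs⟩ := distTriang_coyoneda_exact hT (𝟙 M) (by rw [hM B hB g, comp_zero])
  exact hret ⟨s, f, hs.symm⟩ hA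

lemma eq_rightOrth_of_forall_mem_extStar (hret : ∀ {M B : C}, Retract M B → B ∈ T2 → M ∈ T2)
    (hhom : ∀ A ∈ T1, ∀ B ∈ T2, ∀ f : A ⟶ B, f = 0) (htri : ∀ M : C, M ∈ extStar T1 T2) :
    T2 = rightOrth T1 := by
  refine Set.Subset.antisymm (fun B hB A hA f => hhom A hA B hB f) fun M hM => ?_
  obtain ⟨A, B, f, g, h, hT, hA, hB⟩ := htri M
  obtain ⟨t, ht⟩ := distTriang_yoneda_exact hT (𝟙 M) (by rw [hM A hA f, zero_comp])
  exact hret ⟨g, t, ht.symm⟩ hB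

variable [HasBinaryBiproducts C]

theorem TorsionPair.of_orth {Y Z : Set C}
    (hhom : ∀ A ∈ leftOrth Y, ∀ B ∈ rightOrth Z, ∀ f : A ⟶ B, f = 0)
    (htri : ∀ M : C, M ∈ extStar (leftOrth Y) (rightOrth Z)) :
    TorsionPair (leftOrth Y) (rightOrth Z) where
  iso1 e := mem_leftOrth_of_retract (.ofIso e.symm)
  iso2 e := mem_rightOrth_of_retract (.ofIso e.symm)
  zero1 _ hM _ _ f := hM.eq_of_src f 0
  zero2 _ hM _ _ f := hM.eq_of_tgt f 0
  sum1 _ _ hP hQ y hy f := biprod.hom_ext' _ _ (by simp [hP y hy]) (by simp [hQ y hy])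
  sum2 _ _ hP hQ y hy f := biprod.hom_ext _ _ (by simp [hP y hy]) (by simp [hQ y hy])
  summand1 P Q := mem_leftOrth_of_retract (BinaryBiproduct.bicone P Q).retract_left
  summand2 P Q := mem_rightOrth_of_retract (BinaryBiproduct.bicone P Q).retract_left
  hom_zero := hhom
  exists_triangle := htri

theorem TorsionPair.exists_rightApprox (tp : TorsionPair T1 T2) (M : C) :
    ∃ (A : C) (f : A ⟶ M), A ∈ T1 ∧ IsRightApprox T1 f := by
  obtain ⟨A, B, f, g, h, hT, hA, hB⟩ := tp.exists_triangle M
  refine ⟨A, f, hA, fun A' hA' u => ?_⟩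
  obtain ⟨v, hv⟩ := distTriang_coyoneda_exact hT u (tp.hom_zero A' hA' B hB _)
  exact ⟨v, hv.symm⟩

theorem TorsionPair.exists_leftApprox (tp : TorsionPair T1 T2) (M : C) :
    ∃ (B : C) (g : M ⟶ B), B ∈ T2 ∧ IsLeftApprox T2 g := by
  obtain ⟨A, B, f, g, h, hT, hA, hB⟩ := tp.exists_triangle M
  refine ⟨B, g, hB, fun B' hB' u => ?_⟩
  obtain ⟨v, hv⟩ := distTriang_yoneda_exact hT u (tp.hom_zero A hA B' hB' _)
  exact ⟨v, hv.symm⟩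

end Pretriangulated

section Filtration

variable {X : Set C}

lemma mem_filt_of_iso_s12 {n : ℕ} {A B : C} (e : A ≅ B) (hA : A ∈ filt X n) : B ∈ filt X n := by
  cases n with
  | zero => exact hA.of_iso e.symm
  | succ n =>
    obtain ⟨P, Q, f, g, h, hT, hP, hQ⟩ := hA
    exact ⟨P, Q, f ≫ e.hom, e.inv ≫ g, h, isomorphic_distinguished _ hT _
      (Triangle.isoMk _ _ (Iso.refl P) e.symm (Iso.refl Q)
        (show (f ≫ e.hom) ≫ e.inv = 𝟙 P ≫ f by simp) (show (e.inv ≫ g) ≫ 𝟙 Q = e.inv ≫ g by simp)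
        (show h ≫ (𝟙 P)⟦(1:ℤ)⟧' = 𝟙 Q ≫ h by simp)), hP, hQ⟩

lemma mem_filt_one {x : C} (hx : x ∈ X) : x ∈ filt X 1 :=
  ⟨0, x, 0, 𝟙 x, 0, contractible_distinguished₁ x, isZero_zero C, Or.inl hx⟩

lemma filtClosure_hom_rightOrth_eq_zero :
    ∀ A ∈ filtClosure X, ∀ B ∈ rightOrth X, ∀ f : A ⟶ B, f = 0 := by
  rintro A ⟨n, hA⟩ B hB f
  induction n generalizing A with
  | zero => exact hA.eq_of_src f 0
  | succ n ih =>
    obtain ⟨N, s, a, b, c, hT, hN, hs⟩ := hA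
    obtain ⟨t, rfl⟩ := distTriang_yoneda_exact hT f (ih N hN (a ≫ f))
    rw [hs.elim (fun hs => hB s hs t) (fun hs => hs.eq_of_src t 0), comp_zero]

lemma leftOrth_hom_filtClosure_eq_zero :
    ∀ A ∈ leftOrth X, ∀ B ∈ filtClosure X, ∀ f : A ⟶ B, f = 0 := by
  rintro A hA B ⟨n, hB⟩ f
  induction n generalizing B with
  | zero => exact hB.eq_of_tgt f 0
  | succ n ih =>
    obtain ⟨N, s, a, b, c, hT, hN, hs⟩ := hB
    have hfb : f ≫ b = 0 := hs.elim (fun hs => hA s hs _) (fun hs => hs.eq_of_tgt _ 0)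
    obtain ⟨t, rfl⟩ := distTriang_coyoneda_exact hT f hfb
    rw [ih N hN t, zero_comp]

end Filtration

section Triangulated

variable [IsTriangulated C] {S X : Set C}

lemma mem_filt_add {m n : ℕ} {A M B : C} {f : A ⟶ M} {g : M ⟶ B} {h : B ⟶ A⟦(1:ℤ)⟧}
    (hT : Triangle.mk f g h ∈ distTriang C) (hA : A ∈ filt X m) (hB : B ∈ filt X n) :
    M ∈ filt X (m + n) := by
  induction n generalizing M B with
  | zero =>
    have : IsIso f := (Triangle.isZero₃_iff_isIso₁ _ hT).1 hB
    exact mem_filt_of_iso_s12 (asIso f) hA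
  | succ n ih =>
    obtain ⟨B₁, b, β, γ, δ, hB', hB₁, hb⟩ := hB
    obtain ⟨N, p, q, hN⟩ := distinguished_cocone_triangle₁ (g ≫ γ)
    exact ⟨N, b, p, g ≫ γ, q, hN, ih (Triangulated.someOctahedron' rfl hT hB' hN).mem hB₁, hb⟩

lemma extStar_filtClosure_subset : extStar (filtClosure X) (filtClosure X) ⊆ filtClosure X := by
  rintro M ⟨A, B, f, g, h, hT, ⟨m, hA⟩, ⟨n, hB⟩⟩
  exact ⟨m + n, mem_filt_add hT hA hB⟩

lemma nonempty_iso_cone_of_isIso_comp {x M N s Z : C} {a : N ⟶ M} {b : M ⟶ s}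
    {c : s ⟶ N⟦(1:ℤ)⟧} (hN : Triangle.mk a b c ∈ distTriang C) {u : x ⟶ M} {p : M ⟶ Z}
    {q : Z ⟶ x⟦(1:ℤ)⟧} (hT : Triangle.mk u p q ∈ distTriang C) (hub : IsIso (u ≫ b)) :
    Nonempty (N ≅ Z) := by
  obtain ⟨Z₀, p₀, q₀, h₀⟩ := distinguished_cocone_triangle (u ≫ b)
  have hZ₀ : IsZero Z₀ := (Triangle.isZero₃_iff_isIso₁ _ h₀).2 hub
  have O := Triangulated.someOctahedron rfl hT (rot_of_distTriang _ hN) h₀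
  have hiso : IsIso O.triangle.mor₃ := (Triangle.isZero₂_iff_isIso₃ _ O.mem).1 hZ₀
  exact ⟨(shiftFunctor C (1:ℤ)).preimageIso (@asIso _ _ _ _ O.triangle.mor₃ hiso)⟩

lemma nonempty_iso_fiber_of_isIso {N M s x F : C} {a : N ⟶ M} {b : M ⟶ s} {c : s ⟶ N⟦(1:ℤ)⟧}
    (hN : Triangle.mk a b c ∈ distTriang C) {w : s ⟶ x} [IsIso w] {i : F ⟶ M}
    {j : x ⟶ F⟦(1:ℤ)⟧} (hF : Triangle.mk i (b ≫ w) j ∈ distTriang C) : Nonempty (N ≅ F) := by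
  obtain ⟨Z₀, i₀, j₀, h₀⟩ := distinguished_cocone_triangle₁ w
  have hZ₀ : IsZero Z₀ := (Triangle.isZero₁_iff_isIso₂ _ h₀).2 (inferInstanceAs (IsIso w))
  have O := Triangulated.someOctahedron' rfl hN h₀ hF
  have : IsIso O.m₁ := (Triangle.isZero₃_iff_isIso₁ _ O.mem).1 hZ₀
  exact ⟨asIso O.m₁⟩

lemma cone_mem_filt (hS : OrthogonalBricks S) {n : ℕ} {x M Z : C} (hx : x ∈ S)
    (hM : M ∈ filt S (n + 1)) {u : x ⟶ M} (hu : u ≠ 0) {p : M ⟶ Z} {q : Z ⟶ x⟦(1:ℤ)⟧}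
    (hT : Triangle.mk u p q ∈ distTriang C) : Z ∈ filt S n := by
  induction n using Nat.strong_induction_on generalizing M Z with
  | _ n ih =>
  obtain ⟨N, s, a, b, c, hN, hNmem, hs⟩ := hM
  by_cases hub : u ≫ b = 0
  · obtain ⟨v, rfl⟩ := distTriang_coyoneda_exact hN u hub
    have hv : v ≠ 0 := by rintro rfl; exact hu zero_comp
    obtain _ | k := n
    · exact absurd (hNmem.eq_of_tgt v 0) hv
    obtain ⟨Zv, pv, qv, hTv⟩ := distinguished_cocone_triangle v
    have O := Triangulated.someOctahedron rfl hTv hN hT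
    exact ⟨Zv, s, O.m₁, O.m₃, _, O.mem, ih k k.lt_succ_self hNmem hv hTv, hs⟩
  · have hsS : s ∈ S := hs.resolve_right fun hs0 => hub (hs0.eq_of_tgt _ _)
    have := hS.isIso_of_ne_zero hx hsS hub
    exact mem_filt_of_iso_s12 (nonempty_iso_cone_of_isIso_comp hN hT this).some hNmem

lemma fiber_mem_filt (hS : OrthogonalBricks S) {n : ℕ} {x M F : C} (hx : x ∈ S)
    (hM : M ∈ filt S (n + 1)) {v : M ⟶ x} (hv : v ≠ 0) {i : F ⟶ M} {w : x ⟶ F⟦(1:ℤ)⟧}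
    (hT : Triangle.mk i v w ∈ distTriang C) : F ∈ filt S n := by
  induction n using Nat.strong_induction_on generalizing M F with
  | _ n ih =>
  obtain ⟨N, s, a, b, c, hN, hNmem, hs⟩ := hM
  by_cases hav : a ≫ v = 0
  · obtain ⟨t, rfl⟩ := distTriang_yoneda_exact hN v hav
    have ht : t ≠ 0 := by rintro rfl; exact hv comp_zero
    have hsS : s ∈ S := hs.resolve_right fun hs0 => ht (hs0.eq_of_src _ _)
    have := hS.isIso_of_ne_zero hsS hx ht
    exact mem_filt_of_iso_s12 (nonempty_iso_fiber_of_isIso hN hT).some hNmem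
  · obtain _ | k := n
    · exact absurd (by rw [hNmem.eq_of_src a 0, zero_comp]) hav
    obtain ⟨F', i', w', hF'⟩ := distinguished_cocone_triangle₁ (a ≫ v)
    have O := Triangulated.someOctahedron rfl hN (rot_of_distTriang _ hT)
      (rot_of_distTriang _ hF')
    -- the octahedron gives `s ⟶ F'⟦1⟧ ⟶ F⟦1⟧ ⟶ s⟦1⟧`
    obtain ⟨f', g', h', hU⟩ := exists_distTriang_of_shift (rot_of_distTriang _ O.mem)
    exact ⟨F', s, f', g', h', hU, ih k k.lt_succ_self hNmem hav hF', hs⟩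

lemma mem_filtClosure_of_retract (hX : OrthogonalBricks X) {n : ℕ} {M P : C} (e : Retract M P)
    (hP : P ∈ filt X n) : M ∈ filtClosure X := by
  induction n generalizing M P with
  | zero =>
    exact ⟨0, (IsZero.iff_id_eq_zero M).2 (by rw [← e.retract, hP.eq_of_tgt e.i 0, zero_comp])⟩
  | succ k ih =>
    have ⟨Q, s, a, b, c, hQ, hQmem, hs⟩ := hP
    by_cases hib : e.i ≫ b = 0
    · obtain ⟨j, hj⟩ := distTriang_coyoneda_exact hQ e.i hib
      exact ih ⟨j, a ≫ e.r, by rw [← Category.assoc, ← hj, e.retract]⟩ hQmem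
    have hsX : s ∈ X := hs.resolve_right fun hs0 => hib (hs0.eq_of_tgt _ _)
    have hrib : e.r ≫ e.i ≫ b ≠ 0 := fun h0 => hib (by simpa using e.i ≫= h0)
    obtain ⟨F, f, w, hF⟩ := distinguished_cocone_triangle₁ (e.i ≫ b)
    obtain ⟨G, g, w', hG⟩ := distinguished_cocone_triangle₁ (e.r ≫ e.i ≫ b)
    obtain ⟨eFG⟩ := nonempty_retract_fiber hF hG e (by simp) rfl
    obtain ⟨m, hFmem⟩ := ih eFG (fiber_mem_filt hX hsX hP hrib hG)
    exact ⟨m + 1, F, s, f, e.i ≫ b, w, hF, hFmem, Or.inl hsX⟩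

lemma mem_extStar_filtClosure_rightOrth (hS : OrthogonalBricks S) (hXS : X ⊆ S) {n : ℕ} {M : C}
    (hM : M ∈ filt S n) : M ∈ extStar (filtClosure X) (rightOrth X) := by
  induction n using Nat.strong_induction_on generalizing M with
  | _ n ih =>
  by_cases hMX : M ∈ rightOrth X
  · exact ⟨0, M, 0, 𝟙 M, 0, contractible_distinguished₁ M, ⟨0, isZero_zero C⟩, hMX⟩
  obtain ⟨x, hx, u, hu⟩ : ∃ x ∈ X, ∃ u : x ⟶ M, u ≠ 0 := by simpa [rightOrth] using hMX
  obtain _ | k := n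
  · exact absurd (hM.eq_of_tgt u 0) hu
  obtain ⟨M', p, q, hT⟩ := distinguished_cocone_triangle u
  obtain ⟨A, B, f, g, h, hT', hA, hB⟩ :=
    ih k k.lt_succ_self (cone_mem_filt hS (hXS hx) hM hu hT)
  obtain ⟨W, i, j, hW⟩ := distinguished_cocone_triangle₁ (p ≫ g)
  have O := Triangulated.someOctahedron' rfl hT hT' hW
  exact ⟨W, B, i, p ≫ g, j, hW,
    extStar_filtClosure_subset ⟨x, A, _, _, _, O.mem, ⟨1, mem_filt_one hx⟩, hA⟩, hB⟩

lemma mem_extStar_leftOrth_filtClosure (hS : OrthogonalBricks S) (hXS : X ⊆ S) {n : ℕ} {M : C}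
    (hM : M ∈ filt S n) : M ∈ extStar (leftOrth X) (filtClosure X) := by
  induction n using Nat.strong_induction_on generalizing M with
  | _ n ih =>
  by_cases hMX : M ∈ leftOrth X
  · exact ⟨M, 0, 𝟙 M, 0, 0, contractible_distinguished M, hMX, ⟨0, isZero_zero C⟩⟩
  obtain ⟨x, hx, v, hv⟩ : ∃ x ∈ X, ∃ v : M ⟶ x, v ≠ 0 := by simpa [leftOrth] using hMX
  obtain _ | k := n
  · exact absurd (hM.eq_of_src v 0) hv
  obtain ⟨F, i, w, hT⟩ := distinguished_cocone_triangle₁ v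
  obtain ⟨A, B, f, g, h, hT', hA, hB⟩ :=
    ih k k.lt_succ_self (fiber_mem_filt hS (hXS hx) hM hv hT)
  obtain ⟨V, p, q, hV⟩ := distinguished_cocone_triangle (f ≫ i)
  have O := Triangulated.someOctahedron rfl hT' hT hV
  exact ⟨A, V, f ≫ i, p, q, hV, hA,
    extStar_filtClosure_subset ⟨B, x, _, _, _, O.mem, hB, ⟨1, mem_filt_one hx⟩⟩⟩

end Triangulated

theorem sms_subset_torsionPairs_general [IsTriangulated C] [HasBinaryBiproducts C]
    (S X : Set C) (hS : SimpleMindedSystem S) (hX : X ⊆ S) :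
    TorsionPair (leftOrth X) (filtClosure X) ∧
    TorsionPair (filtClosure X) (rightOrth X) ∧
    (∀ M : C, ∃ (A : C) (f : A ⟶ M), A ∈ filtClosure X ∧ IsRightApprox (filtClosure X) f) ∧
    (∀ M : C, ∃ (B : C) (g : M ⟶ B), B ∈ filtClosure X ∧ IsLeftApprox (filtClosure X) g) ∧
    filtClosure X = rightOrth (leftOrth X) ∧
    filtClosure X = leftOrth (rightOrth X) := by
  have hret {M P : C} (e : Retract M P) (hP : P ∈ filtClosure X) : M ∈ filtClosure X :=
    hP.elim fun _ hP => mem_filtClosure_of_retract (hS.1.mono hX) e hP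
  have triL (M : C) : M ∈ extStar (leftOrth X) (filtClosure X) :=
    (hS.2 M).elim fun _ hM => mem_extStar_leftOrth_filtClosure hS.1 hX hM
  have triR (M : C) : M ∈ extStar (filtClosure X) (rightOrth X) :=
    (hS.2 M).elim fun _ hM => mem_extStar_filtClosure_rightOrth hS.1 hX hM
  have hL : filtClosure X = rightOrth (leftOrth X) :=
    eq_rightOrth_of_forall_mem_extStar hret leftOrth_hom_filtClosure_eq_zero triL
  have hR : filtClosure X = leftOrth (rightOrth X) :=
    eq_leftOrth_of_forall_mem_extStar hret filtClosure_hom_rightOrth_eq_zero triR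
  have tp₁ : TorsionPair (leftOrth X) (filtClosure X) := by
    rw [hL] at triL ⊢
    exact .of_orth (fun A hA B hB => hB A hA) triL
  have tp₂ : TorsionPair (filtClosure X) (rightOrth X) := by
    rw [hR] at triR ⊢
    exact .of_orth (fun A hA B hB => hA B hB) triR
  exact ⟨tp₁, tp₂, tp₂.exists_rightApprox, tp₁.exists_leftApprox, hL, hR⟩

/-- for `X ⊆ S` with `S` a simple-minded system, `(^⊥X, F(X))` and
`(F(X), X^⊥)` are torsion pairs; in particular `F(X)` is functorially finite and
`F(X) = (^⊥X)^⊥ = ^⊥(X^⊥)`. -/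
theorem sms_subset_torsionPairs [IsTriangulated C] [HasBinaryBiproducts C] (k : Type*) [Field k] [Linear k C]
    (hfin : ∀ X Y : C, Module.Finite k (X ⟶ Y)) [IsIdempotentComplete C]
    (S X : Set C) (hS : SimpleMindedSystem S) (hX : X ⊆ S) :
    TorsionPair (leftOrth X) (filtClosure X) ∧
    TorsionPair (filtClosure X) (rightOrth X) ∧
    (∀ M : C, ∃ (A : C) (f : A ⟶ M), A ∈ filtClosure X ∧ IsRightApprox (filtClosure X) f) ∧
    (∀ M : C, ∃ (B : C) (g : M ⟶ B), B ∈ filtClosure X ∧ IsLeftApprox (filtClosure X) g) ∧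
    filtClosure X = rightOrth (leftOrth X) ∧
    filtClosure X = leftOrth (rightOrth X) :=
  sms_subset_torsionPairs_general S X hS hX
end

section
/- Let T have a Serre functor ν, let S be a simple-minded system and X ⊆ S with ν(X[1]) = X. Then ν(F(X)[1]) = F(X). Moreover, for the torsion pair (^⊥X, F(X)) with minimal triangles aX → X → bX →, one has ν(aM)[1] ≅ a(νM[1]) and ν(bM)[1] ≅ b(νM[1]) for all M ∈ T. -/
open CategoryTheory Limits Pretriangulated

universe v u

variable {C : Type u} [Category.{v} C] [Preadditive C] [HasZeroObject C]
  [HasShift C ℤ] [∀ n : ℤ, (shiftFunctor C n).Additive] [Pretriangulated C]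

variable (k : Type*) [Field k] [Linear k C]

/-- `e` is a Serre duality for the auto-equivalence `ν`: natural `k`-linear
isomorphisms `Hom(X,Y) ≅ D Hom(Y, νX)`. -/
def SerreDuality (ν : C ⥤ C)
    (e : ∀ X Y : C, (X ⟶ Y) ≃ₗ[k] Module.Dual k (Y ⟶ ν.obj X)) : Prop :=
  (∀ (X' X Y : C) (u : X' ⟶ X) (g : X ⟶ Y) (h : Y ⟶ ν.obj X'),
      e X' Y (u ≫ g) h = e X Y g (h ≫ ν.map u)) ∧
  (∀ (X Y Y' : C) (g : X ⟶ Y) (v : Y ⟶ Y') (h : Y' ⟶ ν.obj X),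
      e X Y' (g ≫ v) h = e X Y g (v ≫ h))

/-- A class of objects `X` is stable under `ν ∘ [1]` (up to isomorphism):
`ν(X[1]) = X`. -/
def NuShiftStable (ν : C ⥤ C) (X : Set C) : Prop :=
  (∀ Y ∈ X, ∃ Z ∈ X, Nonempty (ν.obj (Y⟦(1:ℤ)⟧) ≅ Z)) ∧
  (∀ Z ∈ X, ∃ Y ∈ X, Nonempty (ν.obj (Y⟦(1:ℤ)⟧) ≅ Z))


/-!
The functor `G = ν ∘ [1]` is an autoequivalence sending distinguished triangles to distinguished
triangles, and `ν(X[1]) = X` says that `G` maps `X` onto `X` up to isomorphism. Induction on the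
length of a filtration shows `G M ∈ (X)ₙ ↔ M ∈ (X)ₙ`. Being an equivalence, `G` also preserves
`^⊥X`, right `^⊥X`-approximations and right minimality, so it carries a minimal
`(^⊥X, F(X))`-triangle of `M` to one of `G M`; minimal triangles of a fixed object are unique up
to isomorphism, since comparison maps between two minimal approximations compose to automorphisms.
-/

open ZeroObject

section Category

variable {E E' : Type*} [Category E] [Category E']

lemma isIso_of_isIso_comp_of_isIso_comp {P Q : E} (v : P ⟶ Q) (w : Q ⟶ P)
    [IsIso (v ≫ w)] [IsIso (w ≫ v)] : IsIso v :=
  have : IsSplitMono v :=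
    IsSplitMono.mk' ⟨w ≫ inv (v ≫ w), by rw [← Category.assoc, IsIso.hom_inv_id]⟩
  have : Epi v := epi_of_epi w v
  isIso_of_epi_of_isSplitMono v

lemma RightMinimal.map (G : E ⥤ E') [G.Full] [G.Faithful] {A M : E} {f : A ⟶ M}
    (hf : RightMinimal f) : RightMinimal (G.map f) := by
  intro u hu
  have : IsIso (G.preimage u) := hf _ (G.map_injective (by simpa using hu))
  simpa using G.map_isIso (G.preimage u)

end Category

section Preadditive

variable {E E' : Type*} [Category E] [Preadditive E] [Category E'] [Preadditive E']

lemma mem_leftOrth_of_iso {X : Set E} {A A' : E} (e : A ≅ A') (hA' : A' ∈ leftOrth X) :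
    A ∈ leftOrth X := fun B hB u => by
  simpa using congrArg (e.hom ≫ ·) (hA' B hB (e.inv ≫ u))

variable (G : E ⥤ E') {X : Set E} {Y : Set E'}

lemma isZero_of_isZero_map [G.Faithful] [G.PreservesZeroMorphisms] {M : E}
    (hM : IsZero (G.obj M)) : IsZero M := by
  rw [IsZero.iff_id_eq_zero] at hM ⊢
  exact G.map_injective (by rw [G.map_id, hM, G.map_zero])

lemma exists_iso_mem_union_isZero [G.PreservesZeroMorphisms]
    (hXY : ∀ B ∈ X, ∃ Z ∈ Y, Nonempty (G.obj B ≅ Z)) {B : E} (hB : B ∈ X ∪ {B | IsZero B}) :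
    ∃ Z ∈ Y ∪ {Z | IsZero Z}, Nonempty (G.obj B ≅ Z) := by
  rcases hB with hB | hB
  · obtain ⟨Z, hZ, e⟩ := hXY B hB
    exact ⟨Z, Or.inl hZ, e⟩
  · exact ⟨G.obj B, Or.inr (G.map_isZero hB), ⟨Iso.refl _⟩⟩

lemma exists_preimage_mem_union_isZero [HasZeroObject E] [G.PreservesZeroMorphisms]
    (hYX : ∀ Z ∈ Y, ∃ B ∈ X, Nonempty (G.obj B ≅ Z)) {Z : E'} (hZ : Z ∈ Y ∪ {Z | IsZero Z}) :
    ∃ B ∈ X ∪ {B | IsZero B}, Nonempty (G.obj B ≅ Z) := by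
  rcases hZ with hZ | hZ
  · obtain ⟨B, hB, e⟩ := hYX Z hZ
    exact ⟨B, Or.inl hB, e⟩
  · exact ⟨0, Or.inr (isZero_zero E), ⟨(G.map_isZero (isZero_zero E)).iso hZ⟩⟩

lemma map_mem_leftOrth [G.Full] (hYX : ∀ Z ∈ Y, ∃ B ∈ X, Nonempty (G.obj B ≅ Z)) {A : E}
    (hA : A ∈ leftOrth X) : G.obj A ∈ leftOrth Y := by
  intro Z hZ u
  obtain ⟨B, hB, ⟨e⟩⟩ := hYX Z hZ
  have hu : u ≫ e.inv = 0 := by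
    rw [← G.map_preimage (u ≫ e.inv), hA B hB (G.preimage _), G.map_zero]
  simpa using hu =≫ e.hom

lemma mem_leftOrth_of_map_mem [G.Faithful] [G.PreservesZeroMorphisms]
    (hXY : ∀ B ∈ X, ∃ Z ∈ Y, Nonempty (G.obj B ≅ Z)) {A : E} (hA : G.obj A ∈ leftOrth Y) :
    A ∈ leftOrth X := by
  intro B hB u
  obtain ⟨Z, hZ, ⟨e⟩⟩ := hXY B hB
  apply G.map_injective
  simpa using hA Z hZ (G.map u ≫ e.hom) =≫ e.inv

lemma IsRightApprox.map [G.Full] [G.Faithful] [G.EssSurj]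
    (hXY : ∀ B ∈ X, ∃ Z ∈ Y, Nonempty (G.obj B ≅ Z)) {A M : E} {f : A ⟶ M}
    (hf : IsRightApprox (leftOrth X) f) : IsRightApprox (leftOrth Y) (G.map f) := by
  intro A' hA' u
  let eA := G.objObjPreimageIso A'
  obtain ⟨v, hv⟩ := hf _ (mem_leftOrth_of_map_mem G hXY (mem_leftOrth_of_iso eA hA'))
    (G.preimage (eA.hom ≫ u))
  exact ⟨eA.inv ≫ G.map v, by
    rw [Category.assoc, ← G.map_comp, hv, G.map_preimage, eA.inv_hom_id_assoc]⟩

end Preadditive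

section Pretriangulated

lemma mem_extStar_of_distinguished {S T : Set C} {A M B B' : C} {f : A ⟶ M} {g : M ⟶ B}
    {h : B ⟶ A⟦(1:ℤ)⟧} (hT : Triangle.mk f g h ∈ distTriang C) (hA : A ∈ S) (e : B ≅ B')
    (hB' : B' ∈ T) : M ∈ extStar S T :=
  ⟨A, B', f, g ≫ e.hom, e.inv ≫ h,
    isomorphic_distinguished _ hT _ (Triangle.isoMk _ _ (Iso.refl _) (Iso.refl _) e.symm
      (by simp [Triangle.mk]) (by simp [Triangle.mk]) (by simp [Triangle.mk])),
    hA, hB'⟩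

lemma mem_filt_of_iso_s14 (S : Set C) : ∀ (n : ℕ) {M N : C}, (M ≅ N) → M ∈ filt S n → N ∈ filt S n
  | 0, _, _, e, hM => hM.of_iso e.symm
  | _ + 1, _, _, e, ⟨A, B, f, g, h, hT, hA, hB⟩ =>
    ⟨A, B, f ≫ e.hom, e.inv ≫ g, h,
      isomorphic_distinguished _ hT _ (Triangle.isoMk _ _ (Iso.refl _) e.symm (Iso.refl _)
        (by simp [Triangle.mk]) (by simp [Triangle.mk]) (by simp [Triangle.mk])),
      hA, hB⟩

lemma distinguished_of_neg {A M B : C} {f : A ⟶ M} {g : M ⟶ B} {h : B ⟶ A⟦(1:ℤ)⟧}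
    (hT : Triangle.mk (-f) (-g) h ∈ distTriang C) : Triangle.mk f g h ∈ distTriang C :=
  isomorphic_distinguished _ hT _ (Triangle.isoMk _ _ (Iso.refl A) (-Iso.refl M) (Iso.refl B)
    (by simp [Triangle.mk]) (by simp [Triangle.mk]) (by simp [Triangle.mk]))

lemma MinTriangle.nonempty_iso {T1 T2 : Set C} {M A₁ B₁ A₂ B₂ : C}
    {f₁ : A₁ ⟶ M} {g₁ : M ⟶ B₁} {h₁ : B₁ ⟶ A₁⟦(1:ℤ)⟧}
    {f₂ : A₂ ⟶ M} {g₂ : M ⟶ B₂} {h₂ : B₂ ⟶ A₂⟦(1:ℤ)⟧}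
    (H₁ : MinTriangle T1 T2 f₁ g₁ h₁) (H₂ : MinTriangle T1 T2 f₂ g₂ h₂) :
    Nonempty (A₁ ≅ A₂) ∧ Nonempty (B₁ ≅ B₂) := by
  obtain ⟨hT₁, hA₁, -, happ₁, hmin₁⟩ := H₁
  obtain ⟨hT₂, hA₂, -, happ₂, hmin₂⟩ := H₂
  obtain ⟨v, hv⟩ := happ₂ A₁ hA₁ f₁
  obtain ⟨w, hw⟩ := happ₁ A₂ hA₂ f₂
  have : IsIso (v ≫ w) := hmin₁ _ (by rw [Category.assoc, hw, hv])
  have : IsIso (w ≫ v) := hmin₂ _ (by rw [Category.assoc, hv, hw])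
  have : IsIso v := isIso_of_isIso_comp_of_isIso_comp v w
  exact ⟨⟨asIso v⟩, ⟨Triangle.π₃.mapIso
    (isoTriangleOfIso₁₂ (Triangle.mk f₁ g₁ h₁) (Triangle.mk f₂ g₂ h₂) hT₁ hT₂ (asIso v : A₁ ≅ A₂)
      (Iso.refl M) (by simp [Triangle.mk, hv]))⟩⟩

variable {D : Type*} [Category D] [Preadditive D] [HasZeroObject D] [HasShift D ℤ]
  [∀ n : ℤ, (shiftFunctor D n).Additive] [Pretriangulated D]

/-- Weaker than `Functor.IsTriangulated`: no `CommShift` structure is needed, so this covers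
`ν ∘ [1]`, which changes the signs of the morphisms of a triangle. -/
def MapsDistTriang (G : C ⥤ D) : Prop :=
  ∀ ⦃A M B : C⦄ (f : A ⟶ M) (g : M ⟶ B) (h : B ⟶ A⟦(1:ℤ)⟧), Triangle.mk f g h ∈ distTriang C →
    ∃ h' : G.obj B ⟶ (G.obj A)⟦(1:ℤ)⟧, Triangle.mk (G.map f) (G.map g) h' ∈ distTriang D

lemma mapsDistTriang_shift_comp (F : C ⥤ D) [F.CommShift ℤ] [F.IsTriangulated] :
    MapsDistTriang (shiftFunctor C (1:ℤ) ⋙ F) := by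
  intro A M B f g h hT
  have hT₁ := Triangle.shift_distinguished _ hT (1:ℤ)
  simp only [Triangle.shiftFunctor_eq, Triangle.shiftFunctor_obj, Int.negOnePow_one,
    Units.neg_smul, one_smul] at hT₁
  exact ⟨_, F.map_distinguished _ (distinguished_of_neg hT₁)⟩

variable (G : C ⥤ D) {X : Set C} {Y : Set D}

lemma map_mem_filt [G.PreservesZeroMorphisms] (hG : MapsDistTriang G)
    (hXY : ∀ B ∈ X, ∃ Z ∈ Y, Nonempty (G.obj B ≅ Z)) :
    ∀ (n : ℕ) {M : C}, M ∈ filt X n → G.obj M ∈ filt Y n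
  | 0, _, hM => G.map_isZero hM
  | n + 1, _, ⟨_, _, f, g, h, hT, hA, hB⟩ => by
    obtain ⟨h', hT'⟩ := hG f g h hT
    obtain ⟨Z, hZ, ⟨e⟩⟩ := exists_iso_mem_union_isZero G hXY hB
    exact mem_extStar_of_distinguished hT' (map_mem_filt hG hXY n hA) e hZ

lemma exists_distinguished_of_map [G.Full] [G.Faithful] [G.EssSurj] (hG : MapsDistTriang G)
    {M : C} {A' B' : D} {f' : A' ⟶ G.obj M} {g' : G.obj M ⟶ B'} {h' : B' ⟶ A'⟦(1:ℤ)⟧}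
    (hT : Triangle.mk f' g' h' ∈ distTriang D) :
    ∃ (A B : C) (f : A ⟶ M) (g : M ⟶ B) (h : B ⟶ A⟦(1:ℤ)⟧), Triangle.mk f g h ∈ distTriang C ∧
      Nonempty (G.obj A ≅ A') ∧ Nonempty (G.obj B ≅ B') := by
  let eA := G.objObjPreimageIso A'
  let f := G.preimage (eA.hom ≫ f')
  obtain ⟨B, g, h, hT₁⟩ := distinguished_cocone_triangle f
  obtain ⟨h₂, hT₂⟩ := hG f g h hT₁
  have hT' : Triangle.mk (eA.hom ≫ f') g' (h' ≫ eA.inv⟦(1:ℤ)⟧') ∈ distTriang D :=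
    isomorphic_distinguished _ hT _ (Triangle.isoMk _ _ eA (Iso.refl _) (Iso.refl _)
      (by simp [Triangle.mk]) (by simp [Triangle.mk]) (by simp [Triangle.mk, ← Functor.map_comp]))
  exact ⟨_, B, f, g, h, hT₁, ⟨eA⟩, ⟨Triangle.π₃.mapIso (isoTriangleOfIso₁₂ _ _ hT₂ hT'
    (Iso.refl _) (Iso.refl _) (by simp [Triangle.mk, f]))⟩⟩

lemma mem_filt_of_map_mem_filt [G.Full] [G.Faithful] [G.EssSurj] (hG : MapsDistTriang G)
    (hYX : ∀ Z ∈ Y, ∃ B ∈ X, Nonempty (G.obj B ≅ Z)) :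
    ∀ (n : ℕ) {M : C}, G.obj M ∈ filt Y n → M ∈ filt X n
  | 0, _, hM => isZero_of_isZero_map G hM
  | n + 1, _, ⟨_, _, _, _, _, hT, hA', hB'⟩ => by
    obtain ⟨_, _, _, _, _, hT₁, ⟨eA⟩, ⟨eB⟩⟩ := exists_distinguished_of_map G hG hT
    obtain ⟨B₀, hB₀, ⟨e₀⟩⟩ := exists_preimage_mem_union_isZero G hYX hB'
    exact mem_extStar_of_distinguished hT₁
      (mem_filt_of_map_mem_filt hG hYX n (mem_filt_of_iso_s14 Y n eA.symm hA'))
      (G.preimageIso (eB ≪≫ e₀.symm)) hB₀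

lemma map_mem_filtClosure_iff [G.Full] [G.Faithful] [G.EssSurj] (hG : MapsDistTriang G)
    (hXY : ∀ B ∈ X, ∃ Z ∈ Y, Nonempty (G.obj B ≅ Z))
    (hYX : ∀ Z ∈ Y, ∃ B ∈ X, Nonempty (G.obj B ≅ Z)) {M : C} :
    G.obj M ∈ filtClosure Y ↔ M ∈ filtClosure X :=
  ⟨fun ⟨n, hM⟩ => ⟨n, mem_filt_of_map_mem_filt G hG hYX n hM⟩,
    fun ⟨n, hM⟩ => ⟨n, map_mem_filt G hG hXY n hM⟩⟩

lemma MinTriangle.map [G.Full] [G.Faithful] [G.EssSurj] (hG : MapsDistTriang G)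
    (hXY : ∀ B ∈ X, ∃ Z ∈ Y, Nonempty (G.obj B ≅ Z))
    (hYX : ∀ Z ∈ Y, ∃ B ∈ X, Nonempty (G.obj B ≅ Z))
    {A M B : C} {f : A ⟶ M} {g : M ⟶ B} {h : B ⟶ A⟦(1:ℤ)⟧}
    (H : MinTriangle (leftOrth X) (filtClosure X) f g h) :
    ∃ h' : G.obj B ⟶ (G.obj A)⟦(1:ℤ)⟧,
      MinTriangle (leftOrth Y) (filtClosure Y) (G.map f) (G.map g) h' := by
  obtain ⟨hT, hA, hB, happ, hmin⟩ := H
  obtain ⟨h', hT'⟩ := hG f g h hT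
  exact ⟨h', hT', map_mem_leftOrth G hYX hA, (map_mem_filtClosure_iff G hG hXY hYX).2 hB,
    happ.map G hXY, hmin.map G⟩

end Pretriangulated

theorem nu_shift_filtClosure_general (ν : C ⥤ C) [ν.IsEquivalence] [ν.CommShift ℤ] [ν.IsTriangulated]
    (X : Set C) (hstab : NuShiftStable ν X) :
    (∀ M : C, M ∈ filtClosure X ↔ ν.obj (M⟦(1:ℤ)⟧) ∈ filtClosure X) ∧
    (∀ (M A B A' B' : C) (f : A ⟶ M) (g : M ⟶ B) (h : B ⟶ A⟦(1:ℤ)⟧)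
        (f' : A' ⟶ ν.obj (M⟦(1:ℤ)⟧)) (g' : ν.obj (M⟦(1:ℤ)⟧) ⟶ B')
        (h' : B' ⟶ A'⟦(1:ℤ)⟧),
      MinTriangle (leftOrth X) (filtClosure X) f g h →
      MinTriangle (leftOrth X) (filtClosure X) f' g' h' →
      Nonempty (ν.obj (A⟦(1:ℤ)⟧) ≅ A') ∧ Nonempty (ν.obj (B⟦(1:ℤ)⟧) ≅ B')) := by
  let G := shiftFunctor C (1:ℤ) ⋙ ν
  have hG : MapsDistTriang G := mapsDistTriang_shift_comp ν
  obtain ⟨hXY, hYX⟩ := hstab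
  refine ⟨fun M => (map_mem_filtClosure_iff G hG hXY hYX).symm, ?_⟩
  intro M A B A' B' f g h f' g' h' H H'
  obtain ⟨h₂, H₂⟩ := H.map G hG hXY hYX
  exact H₂.nonempty_iso H'

/-- if `ν(X[1]) = X` then `ν(F(X)[1]) = F(X)`; moreover for the
torsion pair `(^⊥X, F(X))` with minimal triangles `aM ⟶ M ⟶ bM ⟶`, one has
`ν(aM)[1] ≅ a(νM[1])` and `ν(bM)[1] ≅ b(νM[1])` for all `M`. -/
theorem nu_shift_filtClosure [IsTriangulated C] [HasBinaryBiproducts C] (ν : C ⥤ C) [ν.IsEquivalence] [ν.CommShift ℤ] [ν.IsTriangulated]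
    (e : ∀ X Y : C, (X ⟶ Y) ≃ₗ[k] Module.Dual k (Y ⟶ ν.obj X))
    (he : SerreDuality k ν e) (hfin : ∀ X Y : C, Module.Finite k (X ⟶ Y)) [IsIdempotentComplete C]
    (S X : Set C) (hS : SimpleMindedSystem S) (hX : X ⊆ S)
    (hstab : NuShiftStable ν X) :
    (∀ M : C, M ∈ filtClosure X ↔ ν.obj (M⟦(1:ℤ)⟧) ∈ filtClosure X) ∧
    (∀ (M A B A' B' : C) (f : A ⟶ M) (g : M ⟶ B) (h : B ⟶ A⟦(1:ℤ)⟧)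
        (f' : A' ⟶ ν.obj (M⟦(1:ℤ)⟧)) (g' : ν.obj (M⟦(1:ℤ)⟧) ⟶ B')
        (h' : B' ⟶ A'⟦(1:ℤ)⟧),
      MinTriangle (leftOrth X) (filtClosure X) f g h →
      MinTriangle (leftOrth X) (filtClosure X) f' g' h' →
      Nonempty (ν.obj (A⟦(1:ℤ)⟧) ≅ A') ∧ Nonempty (ν.obj (B⟦(1:ℤ)⟧) ≅ B')) :=
  nu_shift_filtClosure_general ν X hstab
end

section
/- With T having Serre functor ν, S a simple-minded system, X ⊆ S with ν(X[1]) = X, define α = a ∘ [-1] and β = d ∘ [1], where a comes from the torsion pair (^⊥X, F(X)) and d from (F(X), X^⊥). Then for any M ∈ ^⊥X ∩ X^⊥ one has βαM ≅ M ≅ αβM. -/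
open CategoryTheory Limits Pretriangulated

universe v u

variable {C : Type u} [Category.{v} C] [Preadditive C] [HasZeroObject C]
  [HasShift C ℤ] [∀ n : ℤ, (shiftFunctor C n).Additive] [Pretriangulated C]

variable (k : Type*) [Field k] [Linear k C]

/-!
Rotating the first triangle puts it next to the second one: for `βα` both read
`B → A[1] → ? →` with `B, Z ∈ F(X)` and third terms `M`, `D ∈ X^⊥`; for `αβ` both read
`? → D[-1] → ? →` with first terms `M`, `A ∈ ^⊥X` and third terms in `F(X)`. Being built from `X`
by extensions, `F(X)` is left orthogonal to `X^⊥` and right orthogonal to `^⊥X`, so the maps out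
of (resp. into) the common middle term factor through each other. Serre duality with
`ν(X[1]) = X` gives `M[-1] ∈ X^⊥` and `M[1] ∈ ^⊥X`, which makes one composite of the two
comparison maps the identity; minimality of the second triangle makes the other invertible.
-/

lemma extStar_mono {S S' T T' : Set C} (hS : S ⊆ S') (hT : T ⊆ T') :
    extStar S T ⊆ extStar S' T' := by
  rintro Y ⟨A, B, f, g, h, hdist, hA, hB⟩
  exact ⟨A, B, f, g, h, hdist, hS hA, hT hB⟩

lemma filtClosure_subset {X P : Set C} (hzero : {Y : C | IsZero Y} ⊆ P) (hX : X ⊆ P)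
    (hext : extStar P P ⊆ P) : filtClosure X ⊆ P := by
  rintro Y ⟨n, hY⟩
  induction n generalizing Y with
  | zero => exact hzero hY
  | succ n ih => exact hext (extStar_mono ih (Set.union_subset hX hzero) hY)

lemma extStar_leftOrth_subset (S : Set C) : extStar (leftOrth S) (leftOrth S) ⊆ leftOrth S := by
  rintro Y ⟨A, B, f, g, h, hdist, hA, hB⟩ Z hZ u
  obtain ⟨v, rfl⟩ := Triangle.yoneda_exact₂ _ hdist u (hA Z hZ _)
  rw [hB Z hZ v]
  exact comp_zero

lemma extStar_rightOrth_subset (S : Set C) : extStar (rightOrth S) (rightOrth S) ⊆ rightOrth S := by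
  rintro Y ⟨A, B, f, g, h, hdist, hA, hB⟩ Z hZ u
  obtain ⟨v, rfl⟩ := Triangle.coyoneda_exact₂ _ hdist u (hB Z hZ _)
  rw [hA Z hZ v]
  exact zero_comp

lemma filtClosure_subset_leftOrth_rightOrth (X : Set C) :
    filtClosure X ⊆ leftOrth (rightOrth X) :=
  filtClosure_subset (fun _ hY _ _ u => hY.eq_of_src u 0) (fun _ hY _ hN u => hN _ hY u)
    (extStar_leftOrth_subset _)

lemma filtClosure_subset_rightOrth_leftOrth (X : Set C) :
    filtClosure X ⊆ rightOrth (leftOrth X) :=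
  filtClosure_subset (fun _ hY _ _ u => hY.eq_of_tgt u 0) (fun _ hY _ hN u => hN _ hY u)
    (extStar_rightOrth_subset _)

section Duality

omit [HasZeroObject C] [∀ n : ℤ, (shiftFunctor C n).Additive] [HasShift C ℤ] [Pretriangulated C]

lemma mem_leftOrth_of_iso_s15 {S : Set C} {M M' : C} (i : M ≅ M') (hM : M ∈ leftOrth S) :
    M' ∈ leftOrth S :=
  fun Z hZ u => (Preadditive.IsIso.comp_left_eq_zero i.hom u).1 (hM Z hZ _)

lemma mem_rightOrth_of_iso {S : Set C} {M M' : C} (i : M ≅ M') (hM : M ∈ rightOrth S) :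
    M' ∈ rightOrth S :=
  fun Z hZ u => (Preadditive.IsIso.comp_right_eq_zero u i.inv).1 (hM Z hZ _)

variable {k} {ν : C ⥤ C} (e : ∀ P Q : C, (P ⟶ Q) ≃ₗ[k] Module.Dual k (Q ⟶ ν.obj P))
include e

lemma hom_eq_zero_of_forall_hom_to_serre_eq_zero {P Q : C} (h : ∀ v : Q ⟶ ν.obj P, v = 0)
    (u : P ⟶ Q) : u = 0 := by
  have : Subsingleton (Q ⟶ ν.obj P) := ⟨fun a b => (h a).trans (h b).symm⟩
  exact (e P Q).toEquiv.subsingleton.elim u 0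

lemma hom_to_serre_eq_zero_of_forall_eq_zero {P Q : C} (h : ∀ u : P ⟶ Q, u = 0)
    (v : Q ⟶ ν.obj P) : v = 0 := by
  have : Subsingleton (P ⟶ Q) := ⟨fun a b => (h a).trans (h b).symm⟩
  have : Subsingleton (Module.Dual k (Q ⟶ ν.obj P)) := (e P Q).symm.toEquiv.subsingleton
  exact ((Module.subsingleton_dual_iff k).1 this).elim v 0

end Duality

section Shift

omit [HasZeroObject C] [Pretriangulated C]

lemma forall_shift_hom_eq_zero_iff {A B : C} (n : ℤ) :
    (∀ u : A⟦n⟧ ⟶ B⟦n⟧, u = 0) ↔ ∀ u : A ⟶ B, u = 0 := by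
  refine ⟨fun h u => (shiftFunctor C n).map_injective
    ((h _).trans ((shiftFunctor C n).map_zero _ _).symm), fun h u => ?_⟩
  rw [← (shiftFunctor C n).map_preimage u, h ((shiftFunctor C n).preimage u), Functor.map_zero]

variable {k} {ν : C ⥤ C} (e : ∀ P Q : C, (P ⟶ Q) ≃ₗ[k] Module.Dual k (Q ⟶ ν.obj P))
include e

lemma shift_neg_one_mem_rightOrth {X : Set C}
    (hstab : ∀ Y ∈ X, ∃ Z ∈ X, Nonempty (ν.obj (Y⟦(1:ℤ)⟧) ≅ Z)) {M : C}
    (hM : M ∈ leftOrth X) : M⟦(-1:ℤ)⟧ ∈ rightOrth X := by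
  intro Y hY
  obtain ⟨Z, hZ, ⟨i⟩⟩ := hstab Y hY
  have hM' : M⟦(-1:ℤ)⟧⟦(1:ℤ)⟧ ∈ leftOrth X :=
    mem_leftOrth_of_iso_s15 ((shiftFunctorCompIsoId C (-1) 1 (by norm_num)).app M).symm hM
  refine (forall_shift_hom_eq_zero_iff 1).1 (hom_eq_zero_of_forall_hom_to_serre_eq_zero e ?_)
  exact fun v => (Preadditive.IsIso.comp_right_eq_zero v i.hom).1 (hM' Z hZ _)

lemma shift_one_mem_leftOrth {X : Set C}
    (hstab : ∀ Z ∈ X, ∃ Y ∈ X, Nonempty (ν.obj (Y⟦(1:ℤ)⟧) ≅ Z)) {M : C}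
    (hM : M ∈ rightOrth X) : M⟦(1:ℤ)⟧ ∈ leftOrth X := by
  intro Z hZ u
  obtain ⟨Y, hY, ⟨i⟩⟩ := hstab Z hZ
  refine (Preadditive.IsIso.comp_right_eq_zero u i.inv).1 ?_
  exact hom_to_serre_eq_zero_of_forall_eq_zero e ((forall_shift_hom_eq_zero_iff 1).2 (hM Y hY)) _

end Shift

lemma isIso_of_isIso_comp_of_comp_eq_id {D : Type*} [Category D] {P Q : D} (φ : P ⟶ Q)
    (ψ : Q ⟶ P) [IsIso (φ ≫ ψ)] (h : ψ ≫ φ = 𝟙 Q) : IsIso φ :=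
  have : Mono φ := mono_of_mono φ ψ
  have : IsSplitEpi φ := ⟨⟨⟨ψ, h⟩⟩⟩
  isIso_of_mono_of_isSplitEpi φ

lemma RightMinimal.isIso_of_mor₂_comp_eq {T : Triangle C} (hmin : RightMinimal T.mor₁)
    (hT : T ∈ distTriang C) {ρ : T.obj₃ ⟶ T.obj₃} (hρ : T.mor₂ ≫ ρ = T.mor₂) : IsIso ρ := by
  have hcomm : T.mor₂ ≫ ρ = 𝟙 T.obj₂ ≫ T.mor₂ := by rw [hρ, Category.id_comp]
  obtain ⟨τ, hτ₁, hτ₃⟩ := complete_distinguished_triangle_morphism₁ T T hT hT (𝟙 _) ρ hcomm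
  have : IsIso τ := hmin τ (by rw [← hτ₁, Category.comp_id])
  exact isIso₃_of_isIso₁₂ ⟨τ, 𝟙 _, ρ, hτ₁, hcomm, hτ₃⟩ hT hT this inferInstance

lemma nonempty_iso_obj₃_of_rightMinimal {B₁ B₂ Y N₁ N₂ : C}
    {f₁ : B₁ ⟶ Y} {g₁ : Y ⟶ N₁} {h₁ : N₁ ⟶ B₁⟦(1:ℤ)⟧} (hT₁ : Triangle.mk f₁ g₁ h₁ ∈ distTriang C)
    {f₂ : B₂ ⟶ Y} {g₂ : Y ⟶ N₂} {h₂ : N₂ ⟶ B₂⟦(1:ℤ)⟧} (hT₂ : Triangle.mk f₂ g₂ h₂ ∈ distTriang C)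
    (h₁₂ : ∀ u : B₁ ⟶ N₂, u = 0) (h₂₁ : ∀ u : B₂ ⟶ N₁, u = 0)
    (h₁₁ : ∀ u : B₁⟦(1:ℤ)⟧ ⟶ N₁, u = 0) (hmin : RightMinimal f₂) : Nonempty (N₂ ≅ N₁) := by
  obtain ⟨φ, hφ⟩ : ∃ φ : N₁ ⟶ N₂, g₂ = g₁ ≫ φ := Triangle.yoneda_exact₂ _ hT₁ g₂ (h₁₂ _)
  obtain ⟨ψ, hψ⟩ : ∃ ψ : N₂ ⟶ N₁, g₁ = g₂ ≫ ψ := Triangle.yoneda_exact₂ _ hT₂ g₁ (h₂₁ _)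
  have hφψ : φ ≫ ψ = 𝟙 N₁ := by
    obtain ⟨u, hu⟩ : ∃ u : B₁⟦(1:ℤ)⟧ ⟶ N₁, φ ≫ ψ - 𝟙 N₁ = h₁ ≫ u :=
      Triangle.yoneda_exact₃ _ hT₁ _ (by
        show g₁ ≫ (φ ≫ ψ - 𝟙 N₁) = 0
        rw [Preadditive.comp_sub, ← Category.assoc, ← hφ, ← hψ, Category.comp_id, sub_self])
    rw [← sub_eq_zero, hu, h₁₁ u]
    exact comp_zero
  have : IsIso (ψ ≫ φ) :=
    hmin.isIso_of_mor₂_comp_eq hT₂ (by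
      show g₂ ≫ ψ ≫ φ = g₂
      rw [← Category.assoc, ← hψ, ← hφ])
  have := isIso_of_isIso_comp_of_comp_eq_id ψ φ hφψ
  exact ⟨asIso ψ⟩

lemma nonempty_iso_obj₁_of_rightMinimal {N₁ N₂ Y B₁ B₂ : C}
    {f₁ : N₁ ⟶ Y} {g₁ : Y ⟶ B₁} {h₁ : B₁ ⟶ N₁⟦(1:ℤ)⟧} (hT₁ : Triangle.mk f₁ g₁ h₁ ∈ distTriang C)
    {f₂ : N₂ ⟶ Y} {g₂ : Y ⟶ B₂} {h₂ : B₂ ⟶ N₂⟦(1:ℤ)⟧} (hT₂ : Triangle.mk f₂ g₂ h₂ ∈ distTriang C)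
    (h₂₁ : ∀ u : N₂ ⟶ B₁, u = 0) (h₁₂ : ∀ u : N₁ ⟶ B₂, u = 0)
    (h₁₁ : ∀ u : N₁ ⟶ B₁⟦(-1:ℤ)⟧, u = 0) (hmin : RightMinimal f₂) : Nonempty (N₂ ≅ N₁) := by
  obtain ⟨φ, hφ⟩ : ∃ φ : N₂ ⟶ N₁, f₂ = φ ≫ f₁ := Triangle.coyoneda_exact₂ _ hT₁ f₂ (h₂₁ _)
  obtain ⟨ψ, hψ⟩ : ∃ ψ : N₁ ⟶ N₂, f₁ = ψ ≫ f₂ := Triangle.coyoneda_exact₂ _ hT₂ f₁ (h₁₂ _)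
  have hψφ : ψ ≫ φ = 𝟙 N₁ := by
    obtain ⟨u, hu⟩ : ∃ u : N₁ ⟶ B₁⟦(-1:ℤ)⟧,
        ψ ≫ φ - 𝟙 N₁ = u ≫ (Triangle.mk f₁ g₁ h₁).invRotate.mor₁ :=
      Triangle.coyoneda_exact₂ _ (inv_rot_of_distTriang _ hT₁) _ (by
        show (ψ ≫ φ - 𝟙 N₁) ≫ f₁ = 0
        rw [Preadditive.sub_comp, Category.assoc, ← hφ, ← hψ, Category.id_comp, sub_self])
    rw [← sub_eq_zero, hu, h₁₁ u]
    exact zero_comp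
  have : IsIso (φ ≫ ψ) := hmin _ (by rw [Category.assoc, ← hψ, ← hφ])
  have := isIso_of_isIso_comp_of_comp_eq_id φ ψ hψφ
  exact ⟨asIso φ⟩

theorem beta_alpha_iso (ν : C ⥤ C)
    (e : ∀ X Y : C, (X ⟶ Y) ≃ₗ[k] Module.Dual k (Y ⟶ ν.obj X))
    (X : Set C)
    (hstab : NuShiftStable ν X)
    (M : C) (hM1 : M ∈ leftOrth X) (hM2 : M ∈ rightOrth X) :
    (∀ (A B Z D : C) (f : A ⟶ M⟦(-1:ℤ)⟧) (g : M⟦(-1:ℤ)⟧ ⟶ B) (h : B ⟶ A⟦(1:ℤ)⟧)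
        (f' : Z ⟶ A⟦(1:ℤ)⟧) (g' : A⟦(1:ℤ)⟧ ⟶ D) (h' : D ⟶ Z⟦(1:ℤ)⟧),
      MinTriangle (leftOrth X) (filtClosure X) f g h →
      MinTriangle (filtClosure X) (rightOrth X) f' g' h' →
      Nonempty (D ≅ M)) ∧
    (∀ (Z D A B : C) (f : Z ⟶ M⟦(1:ℤ)⟧) (g : M⟦(1:ℤ)⟧ ⟶ D) (h : D ⟶ Z⟦(1:ℤ)⟧)
        (f' : A ⟶ D⟦(-1:ℤ)⟧) (g' : D⟦(-1:ℤ)⟧ ⟶ B) (h' : B ⟶ A⟦(1:ℤ)⟧),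
      MinTriangle (filtClosure X) (rightOrth X) f g h →
      MinTriangle (leftOrth X) (filtClosure X) f' g' h' →
      Nonempty (A ≅ M)) := by
  have hF₁ := filtClosure_subset_leftOrth_rightOrth X
  have hF₂ := filtClosure_subset_rightOrth_leftOrth X
  constructor
  · rintro A B Z D f g h f' g' h' ⟨hT, -, hB, -, -⟩ ⟨hT', hZ, hD, -, hmin⟩
    let i := (shiftFunctorCompIsoId C (-1 : ℤ) 1 (by norm_num)).app M
    obtain ⟨j⟩ := nonempty_iso_obj₃_of_rightMinimal (rot_of_distTriang _ (rot_of_distTriang _ hT))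
      hT' (hF₁ hB D hD) (hF₁ hZ _ (mem_rightOrth_of_iso i.symm hM2))
      ((forall_shift_hom_eq_zero_iff 1).2
        (hF₁ hB _ (shift_neg_one_mem_rightOrth e hstab.1 hM1))) hmin
    exact ⟨j ≪≫ i⟩
  · rintro Z D A B f g h f' g' h' ⟨hT, hZ, -, -, -⟩ ⟨hT', hA, hB, -, hmin⟩
    let i := (shiftFunctorCompIsoId C (1 : ℤ) (-1) (by norm_num)).app M
    obtain ⟨j⟩ := nonempty_iso_obj₁_of_rightMinimal
      (inv_rot_of_distTriang _ (inv_rot_of_distTriang _ hT))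
      hT' (hF₂ hZ A hA) (hF₂ hB _ (mem_leftOrth_of_iso_s15 i.symm hM1))
      ((forall_shift_hom_eq_zero_iff (-1)).2
        (hF₂ hZ _ (shift_one_mem_leftOrth e hstab.2 hM2))) hmin
    exact ⟨j ≪≫ i⟩
end
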